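/- arXiv:2603.00583 — 12 statements merged into one kernel-verified Lean document; each statement's English description precedes it below -/
import Mathlib

section
/- Let E₁ and E₂ be real normed spaces and T : S(E₁) → S(E₂) a surjective phase-isometry. Then T(-f) = -T(f) for every f ∈ S(E₁). -/
lemma aux_ne_neg_self {E : Type*} [NormedAddCommGroup E] [NormedSpace ℝ E]
    (a : E) (ha : ‖a‖ = 1) : a ≠ -a := by
  intro h
  have h2 : a + a = 0 := by nth_rewrite 2 [h]; exact add_neg_cancel a
  have h3 : (2 : ℝ) • a = 0 := by rw [two_smul]; exact h2
  have ha0 : a = 0 := by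
    rcases smul_eq_zero.mp h3 with h4 | h4
    · norm_num at h4
    · exact h4
  rw [ha0, norm_zero] at ha; norm_num at ha

lemma aux_zero_mem {u v : ℝ} (h : ({u, v} : Set ℝ) = {0, 2}) : u = 0 ∨ v = 0 := by
  have : (0 : ℝ) ∈ ({u, v} : Set ℝ) := by rw [h]; left; rfl
  rcases this with h0 | h0
  · exact Or.inl h0.symm
  · exact Or.inr h0.symm

theorem stmt0 {E₁ E₂ : Type*} [NormedAddCommGroup E₁] [NormedSpace ℝ E₁]
    [NormedAddCommGroup E₂] [NormedSpace ℝ E₂]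
    (T : Metric.sphere (0 : E₁) 1 → Metric.sphere (0 : E₂) 1)
    (hsurj : Function.Surjective T)
    (hpi : ∀ f g : Metric.sphere (0 : E₁) 1,
      ({‖(T f : E₂) + (T g : E₂)‖, ‖(T f : E₂) - (T g : E₂)‖} : Set ℝ) =
        {‖(f : E₁) + (g : E₁)‖, ‖(f : E₁) - (g : E₁)‖}) :
    ∀ f : Metric.sphere (0 : E₁) 1, T (-f) = -(T f) := by
  intro f
  have hf : ‖(f : E₁)‖ = 1 := mem_sphere_zero_iff_norm.mp f.2
  have hTf : ‖(T f : E₂)‖ = 1 := mem_sphere_zero_iff_norm.mp (T f).2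
  have hcoe : ((-f : Metric.sphere (0 : E₁) 1) : E₁) = -(f : E₁) := rfl
  have hdouble : ‖(f : E₁) + (f : E₁)‖ = 2 := by
    have : (f : E₁) + (f : E₁) = (2 : ℝ) • (f : E₁) := (two_smul ℝ _).symm
    rw [this, norm_smul, hf]; norm_num
  have h1 := hpi f (-f)
  rw [hcoe] at h1
  simp only [add_neg_cancel, norm_zero, sub_neg_eq_add, hdouble] at h1
  -- h1 : {‖Tf + T(-f)‖, ‖Tf - T(-f)‖} = {0, 2}
  rcases aux_zero_mem h1 with h0 | h0
  · -- Tf + T(-f) = 0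
    have : (T f : E₂) + (T (-f) : E₂) = 0 := by rwa [norm_eq_zero] at h0
    apply Subtype.ext
    show (T (-f) : E₂) = -(T f : E₂)
    exact eq_neg_of_add_eq_zero_right this
  · -- Tf = T(-f); derive contradiction
    have heq : (T (-f) : E₂) = (T f : E₂) := by
      have := sub_eq_zero.mp (norm_eq_zero.mp h0)
      exact this.symm
    exfalso
    obtain ⟨h, hh⟩ := hsurj (-(T f))
    have hTh : (T h : E₂) = -(T f : E₂) := by rw [hh]; rfl
    have h2 := hpi f h
    rw [hTh] at h2
    have hTdouble : ‖(T f : E₂) + (T f : E₂)‖ = 2 := by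
      have : (T f : E₂) + (T f : E₂) = (2 : ℝ) • (T f : E₂) := (two_smul ℝ _).symm
      rw [this, norm_smul, hTf]; norm_num
    simp only [add_neg_cancel, norm_zero, sub_neg_eq_add, hTdouble] at h2
    rcases aux_zero_mem h2.symm with hz | hz
    · -- f + h = 0, so h = -f
      have hfh : (h : E₁) = -(f : E₁) := by
        exact eq_neg_of_add_eq_zero_right (norm_eq_zero.mp hz)
      have : h = -f := Subtype.ext hfh
      rw [this] at hTh
      rw [heq] at hTh
      exact aux_ne_neg_self _ hTf hTh
    · -- f - h = 0, so h = f
      have : h = f := Subtype.ext (sub_eq_zero.mp (norm_eq_zero.mp hz)).symm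
      rw [this] at hTh
      exact aux_ne_neg_self _ hTf hTh
end

section
/- Let E₁ and E₂ be real normed spaces and T : S(E₁) → S(E₂) a surjective phase-isometry. Then T is injective. -/
theorem stmt1 {E₁ E₂ : Type*} [NormedAddCommGroup E₁] [NormedSpace ℝ E₁]
    [NormedAddCommGroup E₂] [NormedSpace ℝ E₂]
    (T : Metric.sphere (0 : E₁) 1 → Metric.sphere (0 : E₂) 1)
    (hsurj : Function.Surjective T)
    (hpi : ∀ f g : Metric.sphere (0 : E₁) 1,
      ({‖(T f : E₂) + (T g : E₂)‖, ‖(T f : E₂) - (T g : E₂)‖} : Set ℝ) =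
        {‖(f : E₁) + (g : E₁)‖, ‖(f : E₁) - (g : E₁)‖}) :
    Function.Injective T := by
  intro f g hfg
  have hnf : ‖(f : E₁)‖ = 1 := mem_sphere_zero_iff_norm.mp f.2
  have hnTf : ‖(T f : E₂)‖ = 1 := mem_sphere_zero_iff_norm.mp (T f).2
  have h1 := hpi f g
  rw [hfg] at h1
  have hadd : ‖(T g : E₂) + (T g : E₂)‖ = 2 := by
    have : ‖(T g : E₂)‖ = 1 := mem_sphere_zero_iff_norm.mp (T g).2
    rw [← two_smul ℝ, norm_smul, this]; norm_num
  have hsub : ‖(T g : E₂) - (T g : E₂)‖ = 0 := by simp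
  rw [hadd, hsub] at h1
  -- now h1 : {2, 0} = {‖f+g‖, ‖f-g‖}
  have h0 : (0 : ℝ) ∈ ({‖(f : E₁) + (g : E₁)‖, ‖(f : E₁) - (g : E₁)‖} : Set ℝ) := by
    rw [← h1]; simp
  rcases h0 with h0 | h0
  · -- ‖f+g‖ = 0, so g = -f
    have hg : (g : E₁) = -(f : E₁) := by
      exact eq_neg_of_add_eq_zero_right (norm_eq_zero.mp h0.symm)
    -- show T f ≠ T (-f) using surjectivity
    exfalso
    have hmem : -(T f : E₂) ∈ Metric.sphere (0 : E₂) 1 := by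
      rw [mem_sphere_zero_iff_norm, norm_neg, hnTf]
    obtain ⟨h, hh⟩ := hsurj ⟨-(T f : E₂), hmem⟩
    have hhc : (T h : E₂) = -(T f : E₂) := by rw [hh]
    have h2 := hpi h f
    rw [hhc] at h2
    have ha : ‖-(T f : E₂) + (T f : E₂)‖ = 0 := by simp
    have hb : ‖-(T f : E₂) - (T f : E₂)‖ = 2 := by
      have : -(T f : E₂) - (T f : E₂) = -((2:ℝ) • (T f : E₂)) := by
        rw [two_smul]; abel
      rw [this, norm_neg, norm_smul, hnTf]; norm_num
    rw [ha, hb] at h2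
    have h02 : (0 : ℝ) ∈ ({‖(h : E₁) + (f : E₁)‖, ‖(h : E₁) - (f : E₁)‖} : Set ℝ) := by
      rw [← h2]; simp
    have hTfne : (T f : E₂) ≠ -(T f : E₂) := by
      intro hc
      have : (2:ℝ) • (T f : E₂) = 0 := by
        rw [two_smul]; nth_rewrite 2 [hc]; simp
      have := smul_eq_zero.mp this
      rcases this with h' | h'
      · norm_num at h'
      · rw [h'] at hnTf; simp at hnTf
    rcases h02 with h02 | h02
    · -- h = -f, so h = g (since g = -f), T h = T g = T f = -T f contradiction
      have hh' : (h : E₁) = -(f : E₁) := by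
        have := norm_eq_zero.mp h02.symm
        exact eq_neg_of_add_eq_zero_left this
      have : h = g := Subtype.ext (by rw [hh', hg])
      rw [this, ← hfg] at hhc
      exact hTfne hhc
    · -- h = f
      have hh' : (h : E₁) = (f : E₁) := by
        have := norm_eq_zero.mp h02.symm
        exact sub_eq_zero.mp this
      have : h = f := Subtype.ext hh'
      rw [this] at hhc
      exact hTfne hhc
  · -- ‖f-g‖ = 0
    exact Subtype.ext (sub_eq_zero.mp (norm_eq_zero.mp h0.symm))
end

section
/- Let L be a locally compact Hausdorff space, and for (t, x) ∈ {−1,1} × L let tM_x = {f ∈ S(C₀(L, ℝ)) : f(x) = t}. If tM_x ⊆ sM_y for (t,x), (s,y) ∈ {−1,1} × L, then t = s and x = y. -/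
open scoped ZeroAtInfty

lemma aux5 {L : Type*} [TopologicalSpace L] [LocallyCompactSpace L] [T2Space L]
    (t : ℝ) (ht : |t| = 1) (x : L) (K : Set L) (hK : IsClosed K) (hx : x ∉ K) :
    ∃ f : C₀(L, ℝ), ‖f‖ = 1 ∧ f x = t ∧ ∀ z ∈ K, f z = 0 := by
  have : Nonempty L := ⟨x⟩
  obtain ⟨g, hg1, hg0, hgc, hgI⟩ :=
    exists_continuous_one_zero_of_isCompact (isCompact_singleton (x := x)) hK
      (Set.disjoint_singleton_left.mpr hx)
  have hcs : HasCompactSupport (fun z => t * g z) := by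
    apply HasCompactSupport.intro hgc (fun z hz => ?_)
    have : g z = 0 := image_eq_zero_of_notMem_tsupport hz
    simp [this]
  refine ⟨⟨⟨fun z => t * g z, by fun_prop⟩, hcs.is_zero_at_infty⟩, ?_, ?_, ?_⟩
  · have hgx : g x = 1 := hg1 rfl
    have hb : ∀ z, ‖t * g z‖ ≤ 1 := by
      intro z
      have := hgI z
      rw [norm_mul, Real.norm_eq_abs, Real.norm_eq_abs, ht, one_mul,
        abs_of_nonneg this.1]
      exact this.2
    apply le_antisymm
    · rw [← ZeroAtInftyContinuousMap.norm_toBCF_eq_norm]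
      exact BoundedContinuousFunction.norm_le_of_nonempty.mpr hb
    · have h := BoundedContinuousFunction.norm_coe_le_norm
        (ZeroAtInftyContinuousMap.toBCF ⟨⟨fun z => t * g z, by fun_prop⟩, hcs.is_zero_at_infty⟩) x
      simp only [ZeroAtInftyContinuousMap.norm_toBCF_eq_norm] at h
      calc (1:ℝ) = ‖t * g x‖ := by rw [hgx, mul_one, Real.norm_eq_abs, ht]
        _ ≤ _ := h
  · simp [hg1 rfl]
  · intro z hz
    simp [hg0 hz]

theorem stmt5 {L : Type*} [TopologicalSpace L] [LocallyCompactSpace L] [T2Space L]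
    (t s : ℝ) (ht : t ∈ ({-1, 1} : Set ℝ)) (hs : s ∈ ({-1, 1} : Set ℝ)) (x y : L)
    (hsub : {f : C₀(L, ℝ) | ‖f‖ = 1 ∧ f x = t} ⊆ {f : C₀(L, ℝ) | ‖f‖ = 1 ∧ f y = s}) :
    t = s ∧ x = y := by
  simp only [Set.mem_insert_iff, Set.mem_singleton_iff] at ht hs
  have ht' : |t| = 1 := by rcases ht with rfl | rfl <;> simp
  have hs' : s ≠ 0 := by rcases hs with rfl | rfl <;> norm_num
  have hxy : x = y := by
    by_contra hne
    obtain ⟨f, hf1, hfx, hfK⟩ := aux5 t ht' x {y} isClosed_singleton (by simpa using hne)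
    have := (hsub ⟨hf1, hfx⟩).2
    rw [hfK y rfl] at this
    exact hs' this.symm
  obtain ⟨f, hf1, hfx, -⟩ := aux5 t ht' x ∅ isClosed_empty (by simp)
  have := (hsub ⟨hf1, hfx⟩).2
  rw [← hxy, hfx] at this
  exact ⟨this, hxy⟩
end

section
/- Let L be a locally compact Hausdorff space and for x ∈ L let M_x = {f ∈ S(C₀(L, ℝ)) : f(x) = 1} and −M_x = {f ∈ S(C₀(L, ℝ)) : f(x) = −1}. If x, y ∈ L satisfy M_x ∪ −M_x ⊆ M_y ∪ −M_y, then x = y. -/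
open scoped ZeroAtInfty

theorem stmt6 {L : Type*} [TopologicalSpace L] [LocallyCompactSpace L] [T2Space L]
    (x y : L)
    (hsub : {f : C₀(L, ℝ) | ‖f‖ = 1 ∧ (f x = 1 ∨ f x = -1)} ⊆
      {f : C₀(L, ℝ) | ‖f‖ = 1 ∧ (f y = 1 ∨ f y = -1)}) :
    x = y := by
  by_contra hxy
  obtain ⟨f, hf1, hf0, hfc, hfi⟩ := exists_continuous_one_zero_of_isCompact
    (isCompact_singleton (x := x)) (isClosed_singleton (x := y))
    (Set.disjoint_singleton.mpr hxy)
  set g : C₀(L, ℝ) := ⟨f, hfc.is_zero_at_infty⟩ with hg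
  have hgx : g x = 1 := hf1 rfl
  have hgy : g y = 0 := hf0 rfl
  have hnorm : ‖g‖ = 1 := by
    rw [← ZeroAtInftyContinuousMap.norm_toBCF_eq_norm]
    apply le_antisymm
    · refine (BoundedContinuousFunction.norm_le (by norm_num)).mpr fun z => ?_
      have := hfi z
      show ‖f z‖ ≤ 1
      rw [Real.norm_eq_abs, abs_le]
      exact ⟨by linarith [this.1], this.2⟩
    · have := BoundedContinuousFunction.norm_coe_le_norm g.toBCF x
      simpa [hgx] using this
  have hm := hsub ⟨hnorm, Or.inl hgx⟩
  rcases hm.2 with h | h <;> simp [hgy] at h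
end

section
/- Let L be a locally compact Hausdorff space and x ∈ L, t ∈ {−1, 1}. Then the set tM_x = {f ∈ S(C₀(L, ℝ)) : f(x) = t} is a maximal convex subset of the unit sphere S(C₀(L, ℝ)). -/
open scoped ZeroAtInfty

open Set Filter

lemma c0_norm_eval_le {L : Type*} [TopologicalSpace L] (f : C₀(L, ℝ)) (y : L) :
    ‖f y‖ ≤ ‖f‖ := by
  rw [← ZeroAtInftyContinuousMap.norm_toBCF_eq_norm]
  exact f.toBCF.norm_coe_le_norm y

lemma c0_norm_le {L : Type*} [TopologicalSpace L] (f : C₀(L, ℝ)) {C : ℝ} (hC : 0 ≤ C)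
    (h : ∀ y, ‖f y‖ ≤ C) : ‖f‖ ≤ C := by
  rw [← ZeroAtInftyContinuousMap.norm_toBCF_eq_norm]
  exact (BoundedContinuousFunction.norm_le hC).2 h

theorem stmt7 {L : Type*} [TopologicalSpace L] [LocallyCompactSpace L] [T2Space L]
    (x : L) (t : ℝ) (ht : t ∈ ({-1, 1} : Set ℝ)) :
    Convex ℝ {f : C₀(L, ℝ) | ‖f‖ = 1 ∧ f x = t} ∧
    {f : C₀(L, ℝ) | ‖f‖ = 1 ∧ f x = t} ⊆ Metric.sphere (0 : C₀(L, ℝ)) 1 ∧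
    ∀ M' : Set C₀(L, ℝ), Convex ℝ M' → M' ⊆ Metric.sphere (0 : C₀(L, ℝ)) 1 →
      {f : C₀(L, ℝ) | ‖f‖ = 1 ∧ f x = t} ⊆ M' →
      M' = {f : C₀(L, ℝ) | ‖f‖ = 1 ∧ f x = t} := by
  simp only [Set.mem_insert_iff, Set.mem_singleton_iff] at ht
  have habs : |t| = 1 := by rcases ht with h | h <;> rw [h] <;> norm_num
  have ht2 : t * t = 1 := by rcases ht with h | h <;> rw [h] <;> norm_num
  -- Convexity
  have hconv : Convex ℝ {f : C₀(L, ℝ) | ‖f‖ = 1 ∧ f x = t} := by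
    rintro f ⟨hf1, hf2⟩ g ⟨hg1, hg2⟩ a b ha hb hab
    have hval : (a • f + b • g) x = t := by
      simp only [ZeroAtInftyContinuousMap.add_apply, ZeroAtInftyContinuousMap.smul_apply,
        smul_eq_mul, hf2, hg2]
      rw [← add_mul, hab, one_mul]
    refine ⟨le_antisymm ?_ ?_, hval⟩
    · calc ‖a • f + b • g‖ ≤ ‖a • f‖ + ‖b • g‖ := norm_add_le _ _
        _ = a * 1 + b * 1 := by
            rw [norm_smul a f, norm_smul b g, hf1, hg1, Real.norm_eq_abs, Real.norm_eq_abs,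
              abs_of_nonneg ha, abs_of_nonneg hb]
        _ = 1 := by rw [mul_one, mul_one, hab]
    · calc (1 : ℝ) = ‖(a • f + b • g) x‖ := by rw [hval, Real.norm_eq_abs, habs]
        _ ≤ ‖a • f + b • g‖ := c0_norm_eval_le _ x
  refine ⟨hconv, fun f hf => by simpa [mem_sphere_iff_norm] using hf.1, ?_⟩
  intro M' hM'conv hM'sph hsub
  apply Subset.antisymm _ hsub
  intro g hg
  have hgnorm : ‖g‖ = 1 := by simpa [mem_sphere_iff_norm] using hM'sph hg
  have hgle : ∀ y, |g y| ≤ 1 := by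
    intro y; rw [← hgnorm]; exact c0_norm_eval_le g y
  refine ⟨hgnorm, ?_⟩
  by_contra hgx
  -- t * g x < 1
  have htg : t * g x < 1 := by
    have h1 : t * g x ≤ |t * g x| := le_abs_self _
    have h2 : |t * g x| = |g x| := by rw [abs_mul, habs, one_mul]
    rcases (h1.trans (h2 ▸ hgle x)).lt_or_eq with h | h
    · exact h
    · exfalso; apply hgx
      have := congrArg (t * ·) h
      rw [← mul_assoc, ht2, one_mul, mul_one] at this
      exact this
  set ε : ℝ := (1 - t * g x) / 2 with hεdef
  have hεpos : 0 < ε := by simp only [hεdef]; linarith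
  have habsg : ∀ y, |t * g y| ≤ 1 := by
    intro y; rw [abs_mul, habs, one_mul]; exact hgle y
  have hεle : ε ≤ 1 := by
    have : -1 ≤ t * g x := (abs_le.1 (habsg x)).1
    simp only [hεdef]; linarith
  -- the open set where t * g < 1 - ε
  set U : Set L := {y | t * g y < 1 - ε} with hUdef
  have hUopen : IsOpen U := by
    have : Continuous fun y => t * g y := continuous_const.mul g.continuous
    exact isOpen_lt this continuous_const
  have hxU : x ∈ U := by
    simp only [hUdef, mem_setOf_eq, hεdef]; linarith
  -- bump function
  obtain ⟨φ, hφ1, hφ0, hφcs, hφ01⟩ :=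
    exists_continuous_one_zero_of_isCompact (X := L) (s := {x}) (t := Uᶜ)
      isCompact_singleton hUopen.isClosed_compl
      (disjoint_compl_right_iff_subset.2 (singleton_subset_iff.2 hxU))
  -- build f ∈ M
  set F : C₀(L, ℝ) := ⟨φ, hφcs.is_zero_at_infty⟩ with hFdef
  have hFapply : ∀ y, F y = φ y := fun y => rfl
  set f : C₀(L, ℝ) := t • F with hfdef
  have hfapply : ∀ y, f y = t * φ y := fun y => rfl
  have hfx : f x = t := by rw [hfapply, hφ1 rfl, Pi.one_apply, mul_one]
  have hfnorm : ‖f‖ = 1 := by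
    apply le_antisymm
    · apply c0_norm_le _ zero_le_one
      intro y
      rw [hfapply, Real.norm_eq_abs, abs_mul, habs, one_mul,
        abs_of_nonneg (hφ01 y).1]
      exact (hφ01 y).2
    · calc (1 : ℝ) = ‖f x‖ := by rw [hfx, Real.norm_eq_abs, habs]
        _ ≤ ‖f‖ := c0_norm_eval_le f x
  have hfM' : f ∈ M' := hsub ⟨hfnorm, hfx⟩
  -- midpoint in M' hence on sphere
  have hmid : (1/2 : ℝ) • f + (1/2 : ℝ) • g ∈ M' :=
    hM'conv hfM' hg (by norm_num) (by norm_num) (by norm_num)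
  have hmidnorm : ‖(1/2 : ℝ) • f + (1/2 : ℝ) • g‖ = 1 := by
    simpa [mem_sphere_iff_norm] using hM'sph hmid
  -- but the norm is < 1
  have hbound : ‖(1/2 : ℝ) • f + (1/2 : ℝ) • g‖ ≤ 1 - ε / 2 := by
    apply c0_norm_le _ (by linarith)
    intro y
    have happ : ((1/2 : ℝ) • f + (1/2 : ℝ) • g) y = (1/2) * (t * φ y) + (1/2) * g y := by
      simp only [ZeroAtInftyContinuousMap.add_apply, ZeroAtInftyContinuousMap.smul_apply,
        smul_eq_mul, hfapply]
    rw [happ, Real.norm_eq_abs]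
    have key : |t * φ y + g y| ≤ 2 - ε := by
      have hteq : |t * φ y + g y| = |φ y + t * g y| := by
        have : t * (φ y + t * g y) = t * φ y + g y := by
          rw [mul_add, ← mul_assoc, ht2, one_mul]
        rw [← this, abs_mul, habs, one_mul]
      rw [hteq]
      by_cases hy : y ∈ U
      · have h1 : t * g y < 1 - ε := hy
        have h2 : -1 ≤ t * g y := (abs_le.1 (habsg y)).1
        rw [abs_le]
        constructor
        · nlinarith [(hφ01 y).1]
        · nlinarith [(hφ01 y).2]
      · have hφy : φ y = 0 := hφ0 hy
        rw [hφy, zero_add, abs_mul, habs, one_mul]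
        linarith [hgle y]
    calc |1/2 * (t * φ y) + 1/2 * g y| = (1/2) * |t * φ y + g y| := by
          rw [← mul_add, abs_mul]; norm_num
      _ ≤ (1/2) * (2 - ε) := by linarith [abs_nonneg (t * φ y + g y),
            mul_le_mul_of_nonneg_left key (by norm_num : (0:ℝ) ≤ 1/2)]
      _ = 1 - ε / 2 := by ring
  rw [hmidnorm] at hbound
  linarith
end

section
/- Let L be a locally compact Hausdorff space. Every maximal convex subset M of the unit sphere S(C₀(L, ℝ)) is of the form tM_x = {f ∈ S(C₀(L, ℝ)) : f(x) = t} for some t ∈ {−1, 1} and x ∈ L. -/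
set_option maxHeartbeats 1000000


open scoped ZeroAtInfty

/-- pointwise bound -/
lemma my_abs_apply_le {L : Type*} [TopologicalSpace L] (f : C₀(L, ℝ)) (x : L) :
    |f x| ≤ ‖f‖ := by
  rw [← ZeroAtInftyContinuousMap.norm_toBCF_eq_norm]
  exact f.toBCF.norm_coe_le_norm x

/-- norm attainment on the sphere -/
lemma my_exists_attain {L : Type*} [TopologicalSpace L] (f : C₀(L, ℝ)) (hf : ‖f‖ = 1) :
    ∃ x : L, |f x| = 1 := by
  have hz : Filter.Tendsto f (Filter.cocompact L) (nhds 0) := f.zero_at_infty'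
  have hmem : f ⁻¹' Metric.ball 0 (1/2) ∈ Filter.cocompact L :=
    hz (Metric.ball_mem_nhds 0 (by norm_num))
  obtain ⟨K, hK, hKsub⟩ := (Filter.hasBasis_cocompact.mem_iff).mp hmem
  set s : Set L := {x | 1/2 ≤ |f x|} with hs
  have hsub : s ⊆ K := by
    intro x hx
    by_contra hxK
    have := hKsub hxK
    simp only [Set.mem_preimage, Metric.mem_ball, Real.dist_eq, sub_zero] at this
    exact absurd this (not_lt.mpr hx)
  have hsc : IsClosed s := isClosed_le continuous_const (continuous_abs.comp f.continuous)
  have hscomp : IsCompact s := hK.of_isClosed_subset hsc hsub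
  have hsne : s.Nonempty := by
    by_contra hemp
    rw [Set.not_nonempty_iff_eq_empty] at hemp
    have : ‖f‖ ≤ 1/2 := by
      rw [← ZeroAtInftyContinuousMap.norm_toBCF_eq_norm]
      refine BoundedContinuousFunction.norm_le (by norm_num) |>.mpr fun x => ?_
      have hxs : x ∉ s := by rw [hemp]; exact Set.notMem_empty x
      simpa [hs, Real.norm_eq_abs] using le_of_not_ge (by simpa [hs] using hxs)
    linarith [hf ▸ this]
  obtain ⟨x, hxs, hmax⟩ := hscomp.exists_isMaxOn hsne
    ((continuous_abs.comp f.continuous).continuousOn)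
  refine ⟨x, le_antisymm (hf ▸ my_abs_apply_le f x) ?_⟩
  have : ‖f‖ ≤ |f x| := by
    rw [← ZeroAtInftyContinuousMap.norm_toBCF_eq_norm]
    refine BoundedContinuousFunction.norm_le (abs_nonneg _) |>.mpr fun y => ?_
    by_cases hy : y ∈ s
    · simpa [Real.norm_eq_abs] using hmax hy
    · have h1 : |f y| < 1/2 := lt_of_not_ge (by simpa [hs] using hy)
      have h2 : (1/2 : ℝ) ≤ |f x| := hxs
      simpa [Real.norm_eq_abs] using le_of_lt (lt_of_lt_of_le h1 h2)
  linarith [hf ▸ this]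

lemma my_sum_apply {L : Type*} [TopologicalSpace L] {ι : Type*} (u : Finset ι)
    (g : ι → C₀(L, ℝ)) (x : L) : (∑ i ∈ u, g i) x = ∑ i ∈ u, g i x :=
  map_sum (AddMonoidHom.mk' (fun f : C₀(L, ℝ) => f x) (fun _ _ => rfl)) g u

theorem stmt8 {L : Type*} [TopologicalSpace L] [LocallyCompactSpace L] [T2Space L]
    (M : Set C₀(L, ℝ)) (hne : M.Nonempty) (hconv : Convex ℝ M) (hMS : M ⊆ Metric.sphere (0 : C₀(L, ℝ)) 1)
    (hmax : ∀ M' : Set C₀(L, ℝ), Convex ℝ M' → M' ⊆ Metric.sphere (0 : C₀(L, ℝ)) 1 →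
      M ⊆ M' → M' = M) :
    ∃ t ∈ ({-1, 1} : Set ℝ), ∃ x : L, M = {f : C₀(L, ℝ) | ‖f‖ = 1 ∧ f x = t} := by
  classical
  -- norms of members are 1
  have hnorm : ∀ f ∈ M, ‖f‖ = 1 := fun f hf => by
    simpa [mem_sphere_zero_iff_norm] using hMS hf
  -- the sign function
  set e : Bool → ℝ := fun b => if b then 1 else -1 with he
  have habse : ∀ b, |e b| = 1 := by intro b; cases b <;> simp [he]
  -- the target sets
  set S : C₀(L, ℝ) → Set (L × Bool) := fun f => {p | f p.1 = e p.2} with hS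
  have hSclosed : ∀ f : C₀(L, ℝ), IsClosed (S f) := by
    intro f
    have hc : Continuous fun p : L × Bool => f p.1 - e p.2 :=
      ((f.continuous.comp continuous_fst).sub
        ((continuous_of_discreteTopology (f := e)).comp continuous_snd))
    have : S f = (fun p : L × Bool => f p.1 - e p.2) ⁻¹' {0} := by
      ext p; simp [hS, sub_eq_zero]
    rw [this]
    exact isClosed_singleton.preimage hc
  have hScompact : ∀ f ∈ M, IsCompact (S f) := by
    intro f hf
    have hz : Filter.Tendsto f (Filter.cocompact L) (nhds 0) := f.zero_at_infty'
    have hmem : f ⁻¹' Metric.ball 0 (1/2) ∈ Filter.cocompact L :=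
      hz (Metric.ball_mem_nhds 0 (by norm_num))
    obtain ⟨K, hK, hKsub⟩ := (Filter.hasBasis_cocompact.mem_iff).mp hmem
    refine (hK.prod isCompact_univ).of_isClosed_subset (hSclosed f) ?_
    rintro ⟨x, b⟩ hp
    refine ⟨?_, Set.mem_univ _⟩
    by_contra hxK
    have := hKsub hxK
    simp only [Set.mem_preimage, Metric.mem_ball, Real.dist_eq, sub_zero] at this
    have : |f x| < 1/2 := this
    have h1 : f x = e b := hp
    rw [h1, habse] at this
    norm_num at this
  -- key sign-agreement lemma for finite families (via averaging)
  have hkey : ∀ u : Finset ↥M, u.Nonempty → ∃ p : L × Bool, ∀ i ∈ u, p ∈ S (i : C₀(L, ℝ)) := by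
    intro u hu
    set n : ℝ := (u.card : ℝ) with hn
    have hnpos : 0 < n := by
      simp only [hn, Nat.cast_pos, Finset.card_pos]; exact hu
    set h : C₀(L, ℝ) := ∑ i ∈ u, (n⁻¹ : ℝ) • (i : C₀(L, ℝ)) with hh
    have hhM : h ∈ M := by
      refine hconv.sum_mem (fun i _ => by positivity) ?_ (fun i _ => i.2)
      rw [Finset.sum_const, nsmul_eq_mul]
      field_simp
      exact hn.symm
    have hhx : ∀ x : L, h x = ∑ i ∈ u, n⁻¹ * (i : C₀(L, ℝ)) x := by
      intro x
      rw [hh, my_sum_apply]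
      simp [ZeroAtInftyContinuousMap.coe_smul]
    obtain ⟨x, hx1⟩ := my_exists_attain h (hnorm h hhM)
    set b : Bool := decide (h x = 1) with hb
    have hxe : h x = e b := by
      have hne1 : (-1 : ℝ) ≠ 1 := by norm_num
      rcases abs_eq (le_of_lt one_pos) |>.mp hx1 with h1 | h1
      · simp [hb, h1, he]
      · simp [hb, h1, he, hne1]
    refine ⟨(x, b), fun i hi => ?_⟩
    -- show (i : C₀) x = e b
    have hle : ∀ j ∈ u, n⁻¹ * (e b * (j : C₀(L, ℝ)) x) ≤ n⁻¹ * 1 := by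
      intro j _
      have : e b * (j : C₀(L, ℝ)) x ≤ 1 := by
        calc e b * (j : C₀(L, ℝ)) x ≤ |e b * (j : C₀(L, ℝ)) x| := le_abs_self _
        _ = |(j : C₀(L, ℝ)) x| := by rw [abs_mul, habse, one_mul]
        _ ≤ 1 := (hnorm _ j.2) ▸ my_abs_apply_le _ x
      exact mul_le_mul_of_nonneg_left this (inv_nonneg.mpr hnpos.le)
    have hsumeq : ∑ j ∈ u, n⁻¹ * (e b * (j : C₀(L, ℝ)) x) = ∑ j ∈ u, n⁻¹ * 1 := by
      have he2 : e b * e b = 1 := by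
        rw [← abs_mul_abs_self (e b), habse, one_mul]
      calc ∑ j ∈ u, n⁻¹ * (e b * (j : C₀(L, ℝ)) x)
          = e b * ∑ j ∈ u, n⁻¹ * (j : C₀(L, ℝ)) x := by
            rw [Finset.mul_sum]; congr 1; ext j; ring
        _ = e b * h x := by rw [hhx]
        _ = 1 := by rw [hxe, he2]
        _ = ∑ j ∈ u, n⁻¹ * 1 := by
            rw [Finset.sum_const, nsmul_eq_mul]; field_simp; exact hn
    have heach := (Finset.sum_eq_sum_iff_of_le hle).mp hsumeq i hi
    have : e b * (i : C₀(L, ℝ)) x = 1 := by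
      have hninv : (n⁻¹ : ℝ) ≠ 0 := inv_ne_zero hnpos.ne'
      have h2 := mul_left_cancel₀ hninv heach
      linarith
    have he2 : e b * e b = 1 := by
      rw [← abs_mul_abs_self (e b), habse, one_mul]
    show (i : C₀(L, ℝ)) x = e b
    calc (i : C₀(L, ℝ)) x = (e b * e b) * (i : C₀(L, ℝ)) x := by rw [he2, one_mul]
      _ = e b * (e b * (i : C₀(L, ℝ)) x) := by ring
      _ = e b := by rw [this, mul_one]
  -- FIP: the intersection over all of M is nonempty
  obtain ⟨f₀, hf₀⟩ := hne
  have hinter : (⋂ i : ↥M, S (i : C₀(L, ℝ))).Nonempty := by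
    by_contra hemp
    rw [Set.not_nonempty_iff_eq_empty] at hemp
    have hsub0 : S f₀ ∩ ⋂ i : ↥M, S (i : C₀(L, ℝ)) = ∅ := by
      rw [hemp, Set.inter_empty]
    obtain ⟨t, ht⟩ := (hScompact f₀ hf₀).elim_finite_subfamily_closed
      (fun i : ↥M => S (i : C₀(L, ℝ))) (fun i => hSclosed _) hsub0
    obtain ⟨p, hp⟩ := hkey (insert ⟨f₀, hf₀⟩ t) ⟨_, Finset.mem_insert_self _ _⟩
    have hp0 : p ∈ S f₀ := hp ⟨f₀, hf₀⟩ (Finset.mem_insert_self _ _)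
    have hpt : p ∈ ⋂ i ∈ t, S (i : C₀(L, ℝ)) := by
      simp only [Set.mem_iInter]
      exact fun i hi => hp i (Finset.mem_insert_of_mem hi)
    rw [Set.eq_empty_iff_forall_notMem] at ht
    exact ht p ⟨hp0, hpt⟩
  obtain ⟨⟨x, b⟩, hp⟩ := hinter
  simp only [Set.mem_iInter] at hp
  refine ⟨e b, by cases b <;> simp [he], x, ?_⟩
  set T : Set C₀(L, ℝ) := {f | ‖f‖ = 1 ∧ f x = e b} with hT
  have hMT : M ⊆ T := fun f hf => ⟨hnorm f hf, hp ⟨f, hf⟩⟩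
  have hTconv : Convex ℝ T := by
    rintro f ⟨hf1, hf2⟩ g ⟨hg1, hg2⟩ a c ha hc hac
    have hval : (a • f + c • g) x = e b := by
      simp only [ZeroAtInftyContinuousMap.coe_add, ZeroAtInftyContinuousMap.coe_smul,
        Pi.add_apply, Pi.smul_apply, smul_eq_mul, hf2, hg2]
      rw [← add_mul, hac, one_mul]
    refine ⟨le_antisymm ?_ ?_, hval⟩
    · calc ‖a • f + c • g‖ ≤ ‖a • f‖ + ‖c • g‖ := norm_add_le _ _
        _ ≤ ‖a‖ * ‖f‖ + ‖c‖ * ‖g‖ := by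
            exact add_le_add (norm_smul_le a f) (norm_smul_le c g)
        _ = 1 := by
            rw [hf1, hg1, Real.norm_eq_abs, Real.norm_eq_abs,
              abs_of_nonneg ha, abs_of_nonneg hc]
            simpa using hac
    · calc (1:ℝ) = |e b| := (habse b).symm
        _ = |(a • f + c • g) x| := by rw [hval]
        _ ≤ ‖a • f + c • g‖ := my_abs_apply_le _ x
  have hTS : T ⊆ Metric.sphere (0 : C₀(L, ℝ)) 1 := fun f hf => by
    simpa [mem_sphere_zero_iff_norm] using hf.1
  exact (hmax T hTconv hTS hMT).symm
end

section
/- Let E be a real Banach space. For every maximal convex subset M of the unit sphere S(E), there exists an extreme point ξ of the closed unit ball of the dual space E* such that M = {x ∈ S(E) : ξ(x) = 1}. -/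
open Metric Set


private lemma opNorm_le_of_lt_on_ball {E : Type*} [NormedAddCommGroup E] [NormedSpace ℝ E]
    (f : E →L[ℝ] ℝ) (u : ℝ) (h : ∀ a : E, ‖a‖ < 1 → f a < u) : ‖f‖ ≤ u := by
  have hu : 0 < u := by simpa using h 0 (by simp)
  have key : ∀ x : E, f x ≤ u * ‖x‖ := by
    intro x
    rcases eq_or_ne x 0 with rfl | hx
    · simp
    · by_contra hc
      push_neg at hc
      have hxn : 0 < ‖x‖ := norm_pos_iff.2 hx
      have hfx : 0 < f x := lt_of_le_of_lt (by positivity) hc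
      set t : ℝ := (u * ‖x‖ / f x + 1) / 2 with ht
      have h1 : u * ‖x‖ / f x < 1 := (div_lt_one hfx).2 hc
      have h0 : 0 ≤ u * ‖x‖ / f x := by positivity
      have ht0 : 0 < t := by simp only [ht]; linarith
      have ht1 : t < 1 := by simp only [ht]; linarith
      have ha : ‖(t / ‖x‖) • x‖ < 1 := by
        rw [norm_smul, Real.norm_eq_abs, abs_of_pos (by positivity),
          div_mul_cancel₀ _ hxn.ne']
        exact ht1
      have h2 := h _ ha
      rw [map_smul, smul_eq_mul] at h2
      have e : t / ‖x‖ * ‖x‖ = t := div_mul_cancel₀ _ hxn.ne'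
      have h3 : t * f x = (u * ‖x‖ + f x) / 2 := by
        field_simp [ht]
        rw [ht]; linear_combination div_mul_cancel₀ (u * ‖x‖) hfx.ne'
      nlinarith [mul_lt_mul_of_pos_right h2 hxn]
  refine f.opNorm_le_bound hu.le fun x => ?_
  rw [Real.norm_eq_abs, abs_le]
  refine ⟨?_, key x⟩
  have := key (-x)
  simp only [map_neg, norm_neg] at this
  linarith

set_option maxHeartbeats 1000000 in
theorem stmt9 {E : Type*} [NormedAddCommGroup E] [NormedSpace ℝ E] [CompleteSpace E]
    (M : Set E) (hconv : Convex ℝ M) (hMS : M ⊆ Metric.sphere (0 : E) 1)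
    (hmax : ∀ M' : Set E, Convex ℝ M' → M' ⊆ Metric.sphere (0 : E) 1 → M ⊆ M' → M' = M) :
    ∃ ξ : StrongDual ℝ E,
      ξ ∈ Set.extremePoints ℝ (Metric.closedBall (0 : StrongDual ℝ E) 1) ∧
      M = {x : E | ‖x‖ = 1 ∧ ξ x = 1} := by
  by_cases hsph : ∃ x : E, ‖x‖ = 1
  · -- M is nonempty
    have hMne : M.Nonempty := by
      by_contra hemp
      rw [Set.not_nonempty_iff_eq_empty] at hemp
      obtain ⟨x, hx⟩ := hsph
      have h1 : ({x} : Set E) ⊆ Metric.sphere 0 1 := by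
        simp [mem_sphere_zero_iff_norm, hx]
      have := hmax {x} (convex_singleton x) h1 (by simp [hemp])
      rw [hemp] at this
      exact (Set.singleton_ne_empty x) this
    -- separation
    have hdisj : Disjoint (Metric.ball (0 : E) 1) M := by
      rw [Set.disjoint_left]
      intro a ha haM
      rw [mem_ball_zero_iff] at ha
      have := mem_sphere_zero_iff_norm.1 (hMS haM)
      linarith [this ▸ ha]
    obtain ⟨f, u, hf1, hf2⟩ :=
      geometric_hahn_banach_open (convex_ball 0 1) isOpen_ball hconv hdisj
    have hu0 : 0 < u := by simpa using hf1 0 (by simp)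
    have hfu : ‖f‖ ≤ u :=
      opNorm_le_of_lt_on_ball f u fun a ha => hf1 a (mem_ball_zero_iff.2 ha)
    have hfb : ∀ b ∈ M, f b = u := by
      intro b hb
      refine le_antisymm ?_ (hf2 b hb)
      calc f b ≤ |f b| := le_abs_self _
        _ ≤ ‖f‖ * ‖b‖ := f.le_opNorm b
        _ = ‖f‖ := by rw [mem_sphere_zero_iff_norm.1 (hMS hb), mul_one]
        _ ≤ u := hfu
    -- normalized functional
    set ξ₀ : StrongDual ℝ E := u⁻¹ • f with hξ₀
    have hξ₀norm : ‖ξ₀‖ ≤ 1 := by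
      rw [hξ₀, norm_smul, Real.norm_eq_abs, abs_of_pos (by positivity),
        inv_mul_le_iff₀ hu0, mul_one]
      exact hfu
    have hξ₀M : ∀ x ∈ M, ξ₀ x = 1 := by
      intro x hx
      rw [hξ₀, ContinuousLinearMap.smul_apply, hfb x hx, smul_eq_mul,
        inv_mul_cancel₀ hu0.ne']
    -- the face F in the weak-star dual
    set B : Set (WeakDual ℝ E) := WeakDual.toStrongDual ⁻¹' Metric.closedBall 0 1 with hB
    have hmemB : ∀ η : WeakDual ℝ E, η ∈ B ↔ ‖WeakDual.toStrongDual η‖ ≤ 1 := by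
      intro η
      rw [hB, Set.mem_preimage, mem_closedBall_zero_iff]
    set F : Set (WeakDual ℝ E) := B ∩ {η : WeakDual ℝ E | ∀ x ∈ M, η x = 1} with hF
    have hBcomp : IsCompact B := WeakDual.isCompact_closedBall (𝕜 := ℝ) 0 1
    have hclosed2 : IsClosed {η : WeakDual ℝ E | ∀ x ∈ M, η x = 1} := by
      have heq : {η : WeakDual ℝ E | ∀ x ∈ M, η x = 1} =
          ⋂ x ∈ M, (fun η : WeakDual ℝ E => η x) ⁻¹' {1} := by
        ext η; simp
      rw [heq]
      exact isClosed_biInter fun x _ =>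
        (isClosed_singleton).preimage (WeakDual.eval_continuous x)
    have hFcomp : IsCompact F := hBcomp.inter_right hclosed2
    have hFne : F.Nonempty := by
      refine ⟨StrongDual.toWeakDual ξ₀, (hmemB _).2 hξ₀norm, fun x hx => hξ₀M x hx⟩
    have hext : IsExtreme ℝ B F := by
      constructor
      · exact Set.inter_subset_left
      · rintro x₁ hx₁ x₂ hx₂ x ⟨hxB, hxM⟩ ⟨a, b, ha, hb, hab, hx⟩
        have key : ∀ y ∈ M, x₁ y = 1 ∧ x₂ y = 1 := by
          intro y hy
          have hyn : ‖y‖ = 1 := mem_sphere_zero_iff_norm.1 (hMS hy)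
          have h₁ : x₁ y ≤ 1 := by
            calc x₁ y ≤ |x₁ y| := le_abs_self _
              _ ≤ ‖WeakDual.toStrongDual x₁‖ * ‖y‖ :=
                  (WeakDual.toStrongDual x₁).le_opNorm y
              _ ≤ 1 := by rw [hyn, mul_one]; exact (hmemB x₁).1 hx₁
          have h₂ : x₂ y ≤ 1 := by
            calc x₂ y ≤ |x₂ y| := le_abs_self _
              _ ≤ ‖WeakDual.toStrongDual x₂‖ * ‖y‖ :=
                  (WeakDual.toStrongDual x₂).le_opNorm y
              _ ≤ 1 := by rw [hyn, mul_one]; exact (hmemB x₂).1 hx₂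
          have hsum : a * x₁ y + b * x₂ y = 1 := by
            have h5 : (a • x₁ + b • x₂) y = a * x₁ y + b * x₂ y := rfl
            rw [← h5, hx]
            exact hxM y hy
          constructor <;> nlinarith
        exact ⟨hx₁, fun y hy => (key y hy).1⟩
    haveI : LocallyConvexSpace ℝ (WeakDual ℝ E) := WeakBilin.locallyConvexSpace
    obtain ⟨ξw, hξw⟩ := hFcomp.extremePoints_nonempty hFne
    have hξB : ξw ∈ B.extremePoints ℝ := hext.extremePoints_subset_extremePoints hξw
    refine ⟨WeakDual.toStrongDual ξw, ?_, ?_⟩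
    · -- transfer the extreme point across the identity equivalence
      rw [mem_extremePoints] at hξB ⊢
      obtain ⟨hmem, hmin⟩ := hξB
      refine ⟨hmem, ?_⟩
      rintro y₁ hy₁ y₂ hy₂ ⟨a, b, ha, hb, hab, hy⟩
      have hy' : a • WeakDual.toStrongDual.symm y₁ + b • WeakDual.toStrongDual.symm y₂ = ξw := by
        have := congrArg WeakDual.toStrongDual.symm hy
        rwa [map_add, map_smul, map_smul, LinearEquiv.symm_apply_apply] at this
      have h6 := hmin (WeakDual.toStrongDual.symm y₁) ((hmemB _).2 (by rw [LinearEquiv.apply_symm_apply]; exact mem_closedBall_zero_iff.1 hy₁))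
        (WeakDual.toStrongDual.symm y₂)
        ((hmemB _).2 (by rw [LinearEquiv.apply_symm_apply]; exact mem_closedBall_zero_iff.1 hy₂))
        ⟨a, b, ha, hb, hab, hy'⟩
      constructor
      · have := congrArg WeakDual.toStrongDual h6.1
        rwa [LinearEquiv.apply_symm_apply] at this
      · have := congrArg WeakDual.toStrongDual h6.2
        rwa [LinearEquiv.apply_symm_apply] at this
    · -- M equals the face
      have hξnorm : ‖WeakDual.toStrongDual ξw‖ ≤ 1 := (hmemB ξw).1 hξw.1.1
      have hξM : ∀ x ∈ M, WeakDual.toStrongDual ξw x = 1 := hξw.1.2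
      set M' : Set E := {x : E | ‖x‖ = 1 ∧ WeakDual.toStrongDual ξw x = 1} with hM'
      have hconv' : Convex ℝ M' := by
        rintro x ⟨hx1, hx2⟩ y ⟨hy1, hy2⟩ a b ha hb hab
        have hval : WeakDual.toStrongDual ξw (a • x + b • y) = 1 := by
          rw [map_add, map_smul, map_smul, smul_eq_mul, smul_eq_mul, hx2, hy2]
          linarith
        constructor
        · refine le_antisymm ?_ ?_
          · calc ‖a • x + b • y‖ ≤ ‖a • x‖ + ‖b • y‖ := norm_add_le _ _
              _ = a + b := by
                rw [norm_smul, norm_smul, Real.norm_eq_abs, Real.norm_eq_abs,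
                  abs_of_nonneg ha, abs_of_nonneg hb, hx1, hy1, mul_one, mul_one]
              _ = 1 := hab
          · have h7 : (1 : ℝ) ≤ ‖WeakDual.toStrongDual ξw‖ * ‖a • x + b • y‖ := by
              rw [← hval]
              exact le_trans (le_abs_self _)
                ((WeakDual.toStrongDual ξw).le_opNorm _)
            nlinarith [norm_nonneg (a • x + b • y)]
        · exact hval
      have hsub' : M' ⊆ Metric.sphere 0 1 := fun x hx =>
        mem_sphere_zero_iff_norm.2 hx.1
      have hMM' : M ⊆ M' := fun x hx =>
        ⟨mem_sphere_zero_iff_norm.1 (hMS hx), hξM x hx⟩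
      exact (hmax M' hconv' hsub' hMM').symm
  · -- trivial case: no unit vectors, E is trivial
    push_neg at hsph
    have hE : ∀ x : E, x = 0 := by
      intro x
      by_contra hx
      exact hsph (‖x‖⁻¹ • x) (by
        rw [norm_smul, Real.norm_eq_abs, abs_of_nonneg (inv_nonneg.2 (norm_nonneg x)),
          inv_mul_cancel₀ (norm_pos_iff.2 hx).ne'])
    have hdual : ∀ g : StrongDual ℝ E, g = 0 := by
      intro g
      ext x
      rw [hE x]
      simp
    refine ⟨0, ⟨Metric.mem_closedBall_self zero_le_one,
      fun a _ b _ _ => hdual a⟩, ?_⟩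
    have hMemp : M = ∅ := by
      rw [Set.eq_empty_iff_forall_notMem]
      intro x hx
      exact hsph x (mem_sphere_zero_iff_norm.1 (hMS hx))
    rw [hMemp, eq_comm, Set.eq_empty_iff_forall_notMem]
    rintro x ⟨hx1, _⟩
    exact hsph x hx1
end

section
/- Let X be a locally compact Hausdorff space, f ∈ S(C₀(X, ℝ)), x₀ ∈ X with |f(x₀)| < 1, and x' ∈ X with |f(x')| = ‖f‖ = 1. Let t = f(x₀)/|f(x₀)| if f(x₀) ≠ 0, and t = 1 if f(x₀) = 0. Then there exists g ∈ S(C₀(X, ℝ)) with g(x₀) = 1 such that the function h = f + (1 − |f(x₀)|)·t·g satisfies ‖h‖ = 1, h(x₀) = t, and h(x') = f(x'). -/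
open scoped ZeroAtInfty
open Set

theorem stmt12 {X : Type*} [TopologicalSpace X] [LocallyCompactSpace X] [T2Space X]
    (f : C₀(X, ℝ)) (hf : ‖f‖ = 1) (x₀ x' : X) (hx₀ : |f x₀| < 1) (hx' : |f x'| = 1)
    (t : ℝ) (htdef : t = if f x₀ = 0 then 1 else f x₀ / |f x₀|) :
    ∃ g : C₀(X, ℝ), ‖g‖ = 1 ∧ g x₀ = 1 ∧
      ‖f + ((1 - |f x₀|) * t) • g‖ = 1 ∧
      (f + ((1 - |f x₀|) * t) • g) x₀ = t ∧
      (f + ((1 - |f x₀|) * t) • g) x' = f x' := by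
  set a : ℝ := |f x₀| with ha_def
  have ha : a < 1 := hx₀
  have ha0 : 0 ≤ a := abs_nonneg _
  have hpos : (0:ℝ) < 1 - a := by linarith
  -- basic facts about t
  have ht_abs : |t| = 1 := by
    rw [htdef]
    split_ifs with h
    · simp
    · rw [abs_div, abs_abs, div_self (abs_ne_zero.mpr h)]
  have htf : t * f x₀ = a := by
    rw [htdef]
    split_ifs with h
    · simp [ha_def, h]
    · have hane : a ≠ 0 := by rw [ha_def]; exact abs_ne_zero.mpr h
      field_simp
      rw [ha_def]
      exact (sq_abs _).symm
  have htt : t * t = 1 := by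
    have := ht_abs
    rcases abs_eq (zero_le_one) |>.mp this with h | h <;> rw [h] <;> ring
  have hfx₀ : f x₀ = t * a := by
    calc f x₀ = (t * t) * f x₀ := by rw [htt, one_mul]
      _ = t * (t * f x₀) := by ring
      _ = t * a := by rw [htf]
  -- pointwise bound on f
  have hb : ∀ x, |f x| ≤ 1 := by
    intro x
    have : ‖f.toBCF x‖ ≤ ‖f.toBCF‖ := f.toBCF.norm_coe_le_norm x
    rwa [ZeroAtInftyContinuousMap.norm_toBCF_eq_norm, hf] at this
  -- x₀ ≠ x'
  have hne : x' ≠ x₀ := by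
    intro h; rw [h] at hx'; linarith [hx'.symm.le.trans_lt hx₀]
  -- bump function k
  obtain ⟨k, hk1, hk0, hkcs, hk01⟩ :=
    exists_continuous_one_zero_of_isCompact (isCompact_singleton (x := x₀))
      (isClosed_singleton (x := x')) (by simp [hne.symm])
  have hkx₀ : k x₀ = 1 := hk1 rfl
  have hkx' : k x' = 0 := hk0 rfl
  -- the function g
  set mfun : X → ℝ := fun x => min 1 ((1 - t * f x) / (1 - a)) with hm_def
  have hmcont : Continuous mfun := by
    apply Continuous.min continuous_const
    exact ((continuous_const.sub (continuous_const.mul f.continuous)).div_const _)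
  have hm0 : ∀ x, 0 ≤ mfun x := by
    intro x
    have h1 : t * f x ≤ 1 := by
      calc t * f x ≤ |t * f x| := le_abs_self _
        _ = |t| * |f x| := abs_mul _ _
        _ ≤ 1 := by rw [ht_abs, one_mul]; exact hb x
    exact le_min zero_le_one (div_nonneg (by linarith) hpos.le)
  set gfun : X → ℝ := fun x => k x * mfun x with hg_def
  have hgcont : Continuous gfun := k.continuous.mul hmcont
  have hgcs : HasCompactSupport gfun := by
    apply hkcs.mul_right
  set g : C₀(X, ℝ) := ⟨⟨gfun, hgcont⟩, hgcs.is_zero_at_infty⟩ with hg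
  have hgapp : ∀ x, g x = k x * mfun x := fun x => rfl
  have hg01 : ∀ x, 0 ≤ g x ∧ g x ≤ 1 := by
    intro x
    constructor
    · exact mul_nonneg (hk01 x).1 (hm0 x)
    · calc k x * mfun x ≤ 1 * 1 :=
          mul_le_mul (hk01 x).2 (min_le_left _ _) (hm0 x) zero_le_one
        _ = 1 := one_mul 1
  have hgx₀ : g x₀ = 1 := by
    have : mfun x₀ = 1 := by
      simp only [hm_def, htf]
      rw [div_self hpos.ne', min_self]
    rw [hgapp, hkx₀, this, one_mul]
  have hgx' : g x' = 0 := by rw [hgapp, hkx', zero_mul]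
  -- key pointwise bound for h
  set h : C₀(X, ℝ) := f + ((1 - a) * t) • g with hh
  have happ : ∀ x, h x = f x + (1 - a) * t * g x := fun x => rfl
  have hhb : ∀ x, |h x| ≤ 1 := by
    intro x
    have key : |t * h x| ≤ 1 := by
      rw [happ]
      have hth : t * (f x + (1 - a) * t * g x) = t * f x + (1 - a) * g x := by
        have : t * ((1 - a) * t * g x) = (1 - a) * (t * t) * g x := by ring
        rw [mul_add, this, htt]; ring
      rw [hth, abs_le]
      have hgb := hg01 x
      have hfb : |f x| ≤ 1 := hb x
      have htfx : |t * f x| ≤ 1 := by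
        rw [abs_mul, ht_abs, one_mul]; exact hfb
      rw [abs_le] at htfx
      constructor
      · nlinarith [hgb.1]
      · -- upper bound: (1-a) * g x ≤ 1 - t * f x
        have hgle : g x ≤ (1 - t * f x) / (1 - a) := by
          calc g x = k x * mfun x := hgapp x
            _ ≤ 1 * mfun x := mul_le_mul_of_nonneg_right (hk01 x).2 (hm0 x)
            _ = mfun x := one_mul _
            _ ≤ (1 - t * f x) / (1 - a) := min_le_right _ _
        have : (1 - a) * g x ≤ 1 - t * f x := by
          calc (1 - a) * g x ≤ (1 - a) * ((1 - t * f x) / (1 - a)) :=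
              mul_le_mul_of_nonneg_left hgle hpos.le
            _ = 1 - t * f x := by field_simp
        linarith
    rwa [abs_mul, ht_abs, one_mul] at key
  have hhx₀ : h x₀ = t := by
    rw [happ, hgx₀, hfx₀]; ring
  refine ⟨g, ?_, hgx₀, ?_, hhx₀, ?_⟩
  · apply le_antisymm
    · rw [← ZeroAtInftyContinuousMap.norm_toBCF_eq_norm]
      rw [BoundedContinuousFunction.norm_le zero_le_one]
      intro x
      have hx1 : g.toBCF x = g x := rfl
      rw [Real.norm_eq_abs, hx1, abs_le]
      exact ⟨by linarith [(hg01 x).1], (hg01 x).2⟩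
    · have : ‖g.toBCF x₀‖ ≤ ‖g.toBCF‖ := g.toBCF.norm_coe_le_norm x₀
      rw [ZeroAtInftyContinuousMap.norm_toBCF_eq_norm] at this
      have hgv : g.toBCF x₀ = (1:ℝ) := hgx₀
      rw [hgv] at this
      simpa using this
  · apply le_antisymm
    · rw [← ZeroAtInftyContinuousMap.norm_toBCF_eq_norm]
      rw [BoundedContinuousFunction.norm_le zero_le_one]
      intro x
      have hx1 : h.toBCF x = h x := rfl
      rw [Real.norm_eq_abs, hx1]
      exact hhb x
    · have : ‖h.toBCF x₀‖ ≤ ‖h.toBCF‖ := h.toBCF.norm_coe_le_norm x₀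
      rw [ZeroAtInftyContinuousMap.norm_toBCF_eq_norm] at this
      have hgv : h.toBCF x₀ = t := hhx₀
      rw [hgv, Real.norm_eq_abs, ht_abs] at this
      exact this
  · show h x' = f x'
    rw [happ, hgx', mul_zero, add_zero]
end

section
/- Let X and Y be locally compact Hausdorff spaces and T : S(C₀(X, ℝ)) → S(C₀(Y, ℝ)) a surjective phase-isometry. Then there exists a bijection τ : X → Y such that for every x ∈ X, T(M_x ∪ −M_x) = N_{τ(x)} ∪ −N_{τ(x)}, where M_x = {f ∈ S(C₀(X, ℝ)) : f(x) = 1} and N_q = {u ∈ S(C₀(Y, ℝ)) : u(q) = 1}. -/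
open scoped ZeroAtInfty
open Set Filter Topology

namespace PI13

variable {L : Type*} [TopologicalSpace L] [LocallyCompactSpace L] [T2Space L]

omit [LocallyCompactSpace L] [T2Space L] in
lemma abs_apply_le_norm (f : C₀(L, ℝ)) (x : L) : |f x| ≤ ‖f‖ := by
  have h := f.toBCF.norm_coe_le_norm x
  rw [ZeroAtInftyContinuousMap.norm_toBCF_eq_norm] at h
  simpa using h

omit [LocallyCompactSpace L] [T2Space L] in
lemma norm_le_of_forall (f : C₀(L, ℝ)) {M : ℝ} (hM : 0 ≤ M) (h : ∀ x, |f x| ≤ M) : ‖f‖ ≤ M := by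
  rw [← ZeroAtInftyContinuousMap.norm_toBCF_eq_norm]
  exact BoundedContinuousFunction.norm_le hM |>.mpr (by simpa using h)

omit [LocallyCompactSpace L] [T2Space L] in
lemma isCompact_ge (f : C₀(L, ℝ)) {ε : ℝ} (hε : 0 < ε) : IsCompact {x | ε ≤ |f x|} := by
  have h := f.zero_at_infty'
  rw [Metric.tendsto_nhds] at h
  have h2 : {x : L | dist (f x) 0 < ε} ∈ cocompact L := h ε hε
  rw [Filter.mem_cocompact] at h2
  obtain ⟨K, hK, hKs⟩ := h2
  apply hK.of_isClosed_subset
  · exact isClosed_le continuous_const (continuous_abs.comp f.continuous)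
  · intro x hx
    by_contra hxK
    have := hKs hxK
    simp only [mem_setOf_eq, Real.dist_eq, sub_zero] at this
    exact absurd hx (by simp only [mem_setOf_eq]; linarith)

omit [LocallyCompactSpace L] [T2Space L] in
lemma exists_abs_eq_norm (f : C₀(L, ℝ)) (hf : 0 < ‖f‖) : ∃ x, |f x| = ‖f‖ := by
  set ε := ‖f‖ / 2 with hε
  have hε0 : 0 < ε := by positivity
  have hC : IsCompact {x | ε ≤ |f x|} := isCompact_ge f hε0
  have hne : {x : L | ε ≤ |f x|}.Nonempty := by
    by_contra hemp
    rw [not_nonempty_iff_eq_empty] at hemp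
    have : ‖f‖ ≤ ε := norm_le_of_forall f hε0.le (fun x => by
      by_contra hx
      exact absurd (mem_setOf_eq ▸ le_of_not_ge hx : x ∈ {x | ε ≤ |f x|}) (hemp ▸ notMem_empty x))
    linarith
  obtain ⟨x₀, hx₀, hmax⟩ := hC.exists_isMaxOn hne ((continuous_abs.comp f.continuous).continuousOn)
  refine ⟨x₀, le_antisymm (abs_apply_le_norm f x₀) ?_⟩
  apply norm_le_of_forall f (abs_nonneg _)
  intro x
  by_cases hx : x ∈ {x | ε ≤ |f x|}
  · exact hmax hx
  · have : |f x| < ε := lt_of_not_ge (by simpa using hx)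
    exact this.le.trans (hx₀ : ε ≤ |f x₀|)

def Peak (f : C₀(L, ℝ)) : Set L := {x | |f x| = 1}

omit [LocallyCompactSpace L] [T2Space L] in
lemma isClosed_peak (f : C₀(L, ℝ)) : IsClosed (Peak f) :=
  isClosed_eq (continuous_abs.comp f.continuous) continuous_const

omit [LocallyCompactSpace L] [T2Space L] in
lemma isCompact_peak (f : C₀(L, ℝ)) : IsCompact (Peak f) := by
  apply (isCompact_ge f (by norm_num : (0:ℝ) < 1/2)).of_isClosed_subset (isClosed_peak f)
  intro x hx
  have : |f x| = 1 := hx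
  simp only [mem_setOf_eq, this]
  norm_num

omit [LocallyCompactSpace L] [T2Space L] in
lemma peak_nonempty (f : C₀(L, ℝ)) (hf : ‖f‖ = 1) : (Peak f).Nonempty := by
  obtain ⟨x, hx⟩ := exists_abs_eq_norm f (by rw [hf]; norm_num)
  exact ⟨x, by simpa [Peak, hf] using hx⟩

omit [LocallyCompactSpace L] [T2Space L] in
lemma peak_neg (f : C₀(L, ℝ)) : Peak (-f) = Peak f := by
  ext x
  simp [Peak]

lemma exists_bump (x : L) {K : Set L} (hK : IsCompact K) (hx : x ∉ K) :
    ∃ f : C₀(L, ℝ), ‖f‖ = 1 ∧ f x = 1 ∧ (∀ y ∈ K, f y = 0) := by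
  obtain ⟨g, hg1, hg0, hgc, hgi⟩ := exists_continuous_one_zero_of_isCompact
    (isCompact_singleton : IsCompact {x}) hK.isClosed (by simpa using hx)
  have hz : Tendsto g (cocompact L) (nhds 0) := by
    apply Tendsto.congr' _ tendsto_const_nhds
    filter_upwards [Filter.mem_cocompact.mpr ⟨tsupport g, hgc, subset_rfl⟩] with y hy
    exact (image_eq_zero_of_notMem_tsupport hy).symm
  set f : C₀(L, ℝ) := ⟨g, hz⟩ with hf
  have hfy : ∀ y, f y = g y := fun _ => rfl
  have hfx : f x = 1 := by rw [hfy]; exact hg1 rfl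
  refine ⟨f, le_antisymm ?_ ?_, hfx, fun y hy => by rw [hfy]; exact hg0 hy⟩
  · apply norm_le_of_forall f zero_le_one
    intro y
    rw [hfy, abs_le]
    exact ⟨by linarith [(hgi y).1], (hgi y).2⟩
  · calc (1:ℝ) = |f x| := by rw [hfx]; norm_num
    _ ≤ ‖f‖ := abs_apply_le_norm f x

noncomputable def midf (f g : C₀(L, ℝ)) : C₀(L, ℝ) :=
  ⟨⟨fun x => (|f x| + |g x|) / 2, ((f.continuous.abs.add g.continuous.abs).div_const 2)⟩, by
    have := ((f.zero_at_infty'.abs.add g.zero_at_infty'.abs).div_const 2)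
    simpa using this⟩

omit [LocallyCompactSpace L] [T2Space L] in
lemma midf_apply (f g : C₀(L, ℝ)) (x : L) : midf f g x = (|f x| + |g x|) / 2 := rfl

omit [LocallyCompactSpace L] [T2Space L] in
lemma peak_midf {f g : C₀(L, ℝ)} (hf : ‖f‖ = 1) (hg : ‖g‖ = 1) :
    Peak (midf f g) = Peak f ∩ Peak g := by
  ext x
  have h1 : |f x| ≤ 1 := hf ▸ abs_apply_le_norm f x
  have h2 : |g x| ≤ 1 := hg ▸ abs_apply_le_norm g x
  simp only [Peak, mem_setOf_eq, mem_inter_iff, midf_apply]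
  rw [abs_of_nonneg (by positivity)]
  constructor
  · intro h
    constructor <;> [linarith [abs_nonneg (g x)]; linarith [abs_nonneg (f x)]]
  · rintro ⟨ha, hb⟩; rw [ha, hb]; norm_num

omit [LocallyCompactSpace L] [T2Space L] in
lemma norm_midf {f g : C₀(L, ℝ)} (hf : ‖f‖ = 1) (hg : ‖g‖ = 1) {x : L}
    (hx : x ∈ Peak f ∩ Peak g) : ‖midf f g‖ = 1 := by
  refine le_antisymm (norm_le_of_forall _ zero_le_one fun y => ?_) ?_
  · have h1 : |f y| ≤ 1 := hf ▸ abs_apply_le_norm f y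
    have h2 : |g y| ≤ 1 := hg ▸ abs_apply_le_norm g y
    rw [midf_apply, abs_of_nonneg (by positivity)]
    linarith
  · have hxm : x ∈ Peak (midf f g) := (peak_midf hf hg) ▸ hx
    calc (1:ℝ) = |midf f g x| := (hxm : |midf f g x| = 1).symm
    _ ≤ ‖midf f g‖ := abs_apply_le_norm _ x

omit [LocallyCompactSpace L] [T2Space L] in
lemma two_iff {f g : C₀(L, ℝ)} (hf : ‖f‖ = 1) (hg : ‖g‖ = 1) :
    (‖f + g‖ = 2 ∨ ‖f - g‖ = 2) ↔ ∃ x, x ∈ Peak f ∧ x ∈ Peak g := by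
  constructor
  · rintro (h | h)
    · obtain ⟨x, hx⟩ := exists_abs_eq_norm (f + g) (by rw [h]; norm_num)
      rw [h] at hx
      have hfg : |f x + g x| = 2 := by simpa using hx
      have h1 : |f x| ≤ 1 := hf ▸ abs_apply_le_norm f x
      have h2 : |g x| ≤ 1 := hg ▸ abs_apply_le_norm g x
      have htri : |f x + g x| ≤ |f x| + |g x| := abs_add_le _ _
      exact ⟨x, by simp only [Peak, mem_setOf_eq]; constructor <;> linarith⟩
    · obtain ⟨x, hx⟩ := exists_abs_eq_norm (f - g) (by rw [h]; norm_num)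
      rw [h] at hx
      have hfg : |f x - g x| = 2 := by simpa using hx
      have h1 : |f x| ≤ 1 := hf ▸ abs_apply_le_norm f x
      have h2 : |g x| ≤ 1 := hg ▸ abs_apply_le_norm g x
      have htri : |f x - g x| ≤ |f x| + |g x| := abs_sub _ _
      exact ⟨x, by simp only [Peak, mem_setOf_eq]; constructor <;> linarith⟩
  · rintro ⟨x, hfx, hgx⟩
    have hfx' : f x = 1 ∨ f x = -1 := (abs_eq zero_le_one).mp hfx
    have hgx' : g x = 1 ∨ g x = -1 := (abs_eq zero_le_one).mp hgx
    have hadd : ‖f + g‖ ≤ 2 := by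
      calc ‖f + g‖ ≤ ‖f‖ + ‖g‖ := norm_add_le f g
      _ = 2 := by rw [hf, hg]; norm_num
    have hsub : ‖f - g‖ ≤ 2 := by
      calc ‖f - g‖ ≤ ‖f‖ + ‖g‖ := norm_sub_le f g
      _ = 2 := by rw [hf, hg]; norm_num
    have haddap : |(f + g) x| ≤ ‖f + g‖ := abs_apply_le_norm _ x
    have hsubap : |(f - g) x| ≤ ‖f - g‖ := abs_apply_le_norm _ x
    simp only [ZeroAtInftyContinuousMap.add_apply, ZeroAtInftyContinuousMap.sub_apply] at haddap hsubap
    rcases hfx' with h1 | h1 <;> rcases hgx' with h2 | h2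
    · left; rw [h1, h2] at haddap
      apply le_antisymm hadd
      have hn : |(1 : ℝ) + 1| = 2 := by norm_num
      rw [hn] at haddap; exact haddap
    · right; rw [h1, h2] at hsubap
      apply le_antisymm hsub
      have hn : |(1 : ℝ) - -1| = 2 := by norm_num
      rw [hn] at hsubap; exact hsubap
    · right; rw [h1, h2] at hsubap
      apply le_antisymm hsub
      have : |(-1 : ℝ) - 1| = 2 := by norm_num
      rw [this] at hsubap; exact hsubap
    · left; rw [h1, h2] at haddap
      apply le_antisymm hadd
      have : |(-1 : ℝ) + -1| = 2 := by norm_num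
      rw [this] at haddap; exact haddap

lemma rel_all_imp {f : C₀(L, ℝ)} {x : L}
    (h : ∀ g : C₀(L, ℝ), ‖g‖ = 1 → g x = 1 → ∃ y, y ∈ Peak g ∧ y ∈ Peak f) :
    x ∈ Peak f := by
  by_contra hx
  obtain ⟨g, hg1, hgx, hg0⟩ := exists_bump x (isCompact_peak f) hx
  obtain ⟨y, hy1, hy2⟩ := h g hg1 hgx
  have : g y = 0 := hg0 y hy2
  have : |g y| = 1 := hy1
  simp_all

lemma peak_subset_of {u v : C₀(L, ℝ)}
    (h : ∀ w : C₀(L, ℝ), ‖w‖ = 1 → (∃ y, y ∈ Peak w ∧ y ∈ Peak u) →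
      ∃ y, y ∈ Peak w ∧ y ∈ Peak v) :
    Peak u ⊆ Peak v := by
  intro y hy
  by_contra hyv
  obtain ⟨w, hw1, hwy, hw0⟩ := exists_bump y (isCompact_peak v) hyv
  obtain ⟨z, hz1, hz2⟩ := h w hw1 ⟨y, by simp [Peak, hwy], hy⟩
  have : w z = 0 := hw0 z hz2
  have : |w z| = 1 := hz1
  simp_all

lemma eq_of_peak_subset {x x' : L}
    (h : ∀ f : C₀(L, ℝ), ‖f‖ = 1 → x ∈ Peak f → x' ∈ Peak f) : x = x' := by
  by_contra hne
  obtain ⟨f, hf1, hfx, hf0⟩ := exists_bump x (isCompact_singleton : IsCompact {x'})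
    (by simpa using hne)
  have hx : x ∈ Peak f := by simp [Peak, hfx]
  have := h f hf1 hx
  have h0 : f x' = 0 := hf0 x' rfl
  have : |f x'| = 1 := this
  simp_all

end PI13

open PI13 in
theorem stmt13 {X Y : Type*} [TopologicalSpace X] [LocallyCompactSpace X] [T2Space X]
    [TopologicalSpace Y] [LocallyCompactSpace Y] [T2Space Y]
    (T : Metric.sphere (0 : C₀(X, ℝ)) 1 → Metric.sphere (0 : C₀(Y, ℝ)) 1)
    (hsurj : Function.Surjective T)
    (hpi : ∀ f g : Metric.sphere (0 : C₀(X, ℝ)) 1,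
      ({‖(T f : C₀(Y, ℝ)) + (T g : C₀(Y, ℝ))‖, ‖(T f : C₀(Y, ℝ)) - (T g : C₀(Y, ℝ))‖} : Set ℝ) =
        {‖(f : C₀(X, ℝ)) + (g : C₀(X, ℝ))‖, ‖(f : C₀(X, ℝ)) - (g : C₀(X, ℝ))‖}) :
    ∃ τ : X → Y, Function.Bijective τ ∧ ∀ x : X,
      T '' {f : Metric.sphere (0 : C₀(X, ℝ)) 1 | (f : C₀(X, ℝ)) x = 1 ∨ (f : C₀(X, ℝ)) x = -1} =
        {u : Metric.sphere (0 : C₀(Y, ℝ)) 1 |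
          (u : C₀(Y, ℝ)) (τ x) = 1 ∨ (u : C₀(Y, ℝ)) (τ x) = -1} := by
  classical
  have nX : ∀ f : ↥(Metric.sphere (0 : C₀(X, ℝ)) 1), ‖(f : C₀(X, ℝ))‖ = 1 := fun f => mem_sphere_zero_iff_norm.mp f.2
  have nY : ∀ u : ↥(Metric.sphere (0 : C₀(Y, ℝ)) 1), ‖(u : C₀(Y, ℝ))‖ = 1 := fun u => mem_sphere_zero_iff_norm.mp u.2
  -- the relation transfer
  have h2 : ∀ f g : ↥(Metric.sphere (0 : C₀(X, ℝ)) 1),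
      (∃ y, y ∈ Peak ((T f : C₀(Y, ℝ))) ∧ y ∈ Peak ((T g : C₀(Y, ℝ)))) ↔
      (∃ x, x ∈ Peak ((f : C₀(X, ℝ))) ∧ x ∈ Peak ((g : C₀(X, ℝ)))) := by
    intro f g
    rw [← two_iff (nY (T f)) (nY (T g)), ← two_iff (nX f) (nX g)]
    have pair := hpi f g
    constructor
    · intro h
      have : (2 : ℝ) ∈ ({‖(T f : C₀(Y, ℝ)) + (T g : C₀(Y, ℝ))‖,
          ‖(T f : C₀(Y, ℝ)) - (T g : C₀(Y, ℝ))‖} : Set ℝ) := by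
        rcases h with h | h
        · exact Or.inl h.symm
        · exact Or.inr (by simpa using h.symm)
      rw [pair] at this
      rcases this with h | h
      · exact Or.inl h.symm
      · exact Or.inr (by simp only [mem_singleton_iff] at h; exact h.symm)
    · intro h
      have : (2 : ℝ) ∈ ({‖(f : C₀(X, ℝ)) + (g : C₀(X, ℝ))‖,
          ‖(f : C₀(X, ℝ)) - (g : C₀(X, ℝ))‖} : Set ℝ) := by
        rcases h with h | h
        · exact Or.inl h.symm
        · exact Or.inr (by simpa using h.symm)
      rw [← pair] at this
      rcases this with h | h
      · exact Or.inl h.symm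
      · exact Or.inr (by simp only [mem_singleton_iff] at h; exact h.symm)
  -- phase injectivity
  have hsign : ∀ f g : ↥(Metric.sphere (0 : C₀(X, ℝ)) 1), T f = T g →
      (f : C₀(X, ℝ)) = (g : C₀(X, ℝ)) ∨ (f : C₀(X, ℝ)) = -(g : C₀(X, ℝ)) := by
    intro f g hT
    have pair := hpi f g
    have h0 : (0 : ℝ) ∈ ({‖(T f : C₀(Y, ℝ)) + (T g : C₀(Y, ℝ))‖,
        ‖(T f : C₀(Y, ℝ)) - (T g : C₀(Y, ℝ))‖} : Set ℝ) := by
      right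
      simp [hT]
    rw [pair] at h0
    rcases h0 with h | h
    · right
      have : (f : C₀(X, ℝ)) + (g : C₀(X, ℝ)) = 0 := by
        rw [← norm_eq_zero]; exact h.symm
      linear_combination (norm := abel_nf) this
    · left
      have : (f : C₀(X, ℝ)) - (g : C₀(X, ℝ)) = 0 := by
        rw [← norm_eq_zero]
        simp only [mem_singleton_iff] at h
        exact h.symm
      linear_combination (norm := abel_nf) this
  -- peak-inclusion transfer, forward
  have hsub : ∀ f g : ↥(Metric.sphere (0 : C₀(X, ℝ)) 1), Peak ((f : C₀(X, ℝ))) ⊆ Peak ((g : C₀(X, ℝ))) →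
      Peak ((T f : C₀(Y, ℝ))) ⊆ Peak ((T g : C₀(Y, ℝ))) := by
    intro f g hfg
    apply peak_subset_of
    intro w hw hrel
    obtain ⟨h, hh⟩ := hsurj ⟨w, mem_sphere_zero_iff_norm.mpr hw⟩
    have hw' : ((T h : C₀(Y, ℝ))) = w := by rw [hh]
    obtain ⟨x, hx1, hx2⟩ := (h2 h f).mp (by rw [hw']; exact hrel)
    have : ∃ x, x ∈ Peak ((h : C₀(X, ℝ))) ∧ x ∈ Peak ((g : C₀(X, ℝ))) :=
      ⟨x, hx1, hfg hx2⟩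
    obtain ⟨y, hy1, hy2⟩ := (h2 h g).mpr this
    exact ⟨y, by rw [← hw']; exact hy1, hy2⟩
  -- peak-inclusion transfer, backward
  have hsub' : ∀ f g : ↥(Metric.sphere (0 : C₀(X, ℝ)) 1), Peak ((T f : C₀(Y, ℝ))) ⊆ Peak ((T g : C₀(Y, ℝ))) →
      Peak ((f : C₀(X, ℝ))) ⊆ Peak ((g : C₀(X, ℝ))) := by
    intro f g hfg
    apply peak_subset_of
    intro w hw hrel
    set h : ↥(Metric.sphere (0 : C₀(X, ℝ)) 1) := ⟨w, mem_sphere_zero_iff_norm.mpr hw⟩ with hhdef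
    have hrel' : ∃ x, x ∈ Peak ((h : C₀(X, ℝ))) ∧ x ∈ Peak ((f : C₀(X, ℝ))) := hrel
    obtain ⟨y, hy1, hy2⟩ := (h2 h f).mpr hrel'
    have : ∃ y, y ∈ Peak ((T h : C₀(Y, ℝ))) ∧ y ∈ Peak ((T g : C₀(Y, ℝ))) :=
      ⟨y, hy1, hfg hy2⟩
    exact (h2 h g).mp this
  -- the clusters
  set C : X → Set ↥(Metric.sphere (0 : C₀(X, ℝ)) 1) := fun x => {f : ↥(Metric.sphere (0 : C₀(X, ℝ)) 1) | x ∈ Peak ((f : C₀(X, ℝ)))} with hC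
  set D : Y → Set ↥(Metric.sphere (0 : C₀(Y, ℝ)) 1) := fun q => {u : ↥(Metric.sphere (0 : C₀(Y, ℝ)) 1) | q ∈ Peak ((u : C₀(Y, ℝ)))} with hD
  have hCne : ∀ x : X, ∃ f : ↥(Metric.sphere (0 : C₀(X, ℝ)) 1), f ∈ C x := by
    intro x
    obtain ⟨f, hf1, hfx, -⟩ := exists_bump x (isCompact_empty : IsCompact (∅ : Set X))
      (notMem_empty x)
    exact ⟨⟨f, mem_sphere_zero_iff_norm.mpr hf1⟩, by simp [hC, Peak, hfx]⟩
  have hDne : ∀ q : Y, ∃ u : ↥(Metric.sphere (0 : C₀(Y, ℝ)) 1), u ∈ D q := by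
    intro q
    obtain ⟨u, hu1, huq, -⟩ := exists_bump q (isCompact_empty : IsCompact (∅ : Set Y))
      (notMem_empty q)
    exact ⟨⟨u, mem_sphere_zero_iff_norm.mpr hu1⟩, by simp [hD, Peak, huq]⟩
  -- Step A: the image of each cluster is a cluster
  have stepA : ∀ x : X, ∃ q : Y, T '' C x = D q := by
    intro x
    obtain ⟨f₀, hf₀⟩ := hCne x
    have hι : Nonempty {f : ↥(Metric.sphere (0 : C₀(X, ℝ)) 1) // f ∈ C x} := ⟨⟨f₀, hf₀⟩⟩
    set t : {f : ↥(Metric.sphere (0 : C₀(X, ℝ)) 1) // f ∈ C x} → Set Y := fun f => Peak ((T f.1 : C₀(Y, ℝ))) with ht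
    have hdir : Directed (· ⊇ ·) t := by
      intro f g
      set m : C₀(X, ℝ) := midf ((f.1 : C₀(X, ℝ))) ((g.1 : C₀(X, ℝ))) with hm
      have hxm : x ∈ Peak ((f.1 : C₀(X, ℝ))) ∩ Peak ((g.1 : C₀(X, ℝ))) := ⟨f.2, g.2⟩
      have hmn : ‖m‖ = 1 := norm_midf (nX f.1) (nX g.1) hxm
      have hpm : Peak m = Peak ((f.1 : C₀(X, ℝ))) ∩ Peak ((g.1 : C₀(X, ℝ))) :=
        peak_midf (nX f.1) (nX g.1)
      set ms : ↥(Metric.sphere (0 : C₀(X, ℝ)) 1) := ⟨m, mem_sphere_zero_iff_norm.mpr hmn⟩ with hms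
      have hmC : ms ∈ C x := by
        simp only [hC, mem_setOf_eq]
        show x ∈ Peak m
        rw [hpm]; exact hxm
      refine ⟨⟨ms, hmC⟩, ?_, ?_⟩
      · exact hsub ms f.1 (by show Peak m ⊆ _; rw [hpm]; exact inter_subset_left)
      · exact hsub ms g.1 (by show Peak m ⊆ _; rw [hpm]; exact inter_subset_right)
    obtain ⟨q, hq⟩ := IsCompact.nonempty_iInter_of_directed_nonempty_isCompact_isClosed t hdir
      (fun f => peak_nonempty _ (nY (T f.1)))
      (fun f => isCompact_peak _)
      (fun f => isClosed_peak _)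
    have himg : T '' C x ⊆ D q := by
      rintro u ⟨f, hf, rfl⟩
      exact mem_iInter.mp hq ⟨f, hf⟩
    refine ⟨q, le_antisymm himg ?_⟩
    intro u hu
    obtain ⟨f, rfl⟩ := hsurj u
    have hxf : x ∈ Peak ((f : C₀(X, ℝ))) := by
      apply rel_all_imp
      intro g hg1 hgx
      set gs : ↥(Metric.sphere (0 : C₀(X, ℝ)) 1) := ⟨g, mem_sphere_zero_iff_norm.mpr hg1⟩ with hgs
      have hgC : gs ∈ C x := by
        simp only [hC, mem_setOf_eq]
        show x ∈ Peak g
        simp [Peak, hgx]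
      have hq1 : q ∈ Peak ((T gs : C₀(Y, ℝ))) := himg ⟨gs, hgC, rfl⟩
      have hq2 : q ∈ Peak ((T f : C₀(Y, ℝ))) := hu
      obtain ⟨x', hx1, hx2⟩ := (h2 gs f).mp ⟨q, hq1, hq2⟩
      exact ⟨x', hx1, hx2⟩
    exact ⟨f, hxf, rfl⟩
  set τ : X → Y := fun x => (stepA x).choose with hτdef
  have hτ : ∀ x, T '' C x = D (τ x) := fun x => (stepA x).choose_spec
  -- injectivity
  have hCsub : ∀ x x' : X, T '' C x = T '' C x' → C x ⊆ C x' := by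
    intro x x' h f hf
    have : T f ∈ T '' C x' := h ▸ ⟨f, hf, rfl⟩
    obtain ⟨g, hg, hTg⟩ := this
    rcases hsign f g hTg.symm with he | he
    · show x' ∈ Peak ((f : C₀(X, ℝ)))
      rw [he]; exact hg
    · show x' ∈ Peak ((f : C₀(X, ℝ)))
      rw [he, peak_neg]; exact hg
  have hinj : Function.Injective τ := by
    intro x x' h
    have him : T '' C x = T '' C x' := by rw [hτ x, hτ x', h]
    apply eq_of_peak_subset (L := X)
    intro f hf1 hxf
    set fs : ↥(Metric.sphere (0 : C₀(X, ℝ)) 1) := ⟨f, mem_sphere_zero_iff_norm.mpr hf1⟩ with hfs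
    have : fs ∈ C x := hxf
    exact hCsub x x' him this
  -- surjectivity
  have hsurjτ : Function.Surjective τ := by
    intro q
    obtain ⟨u₀, hu₀⟩ := hDne q
    obtain ⟨f₀, hf₀⟩ := hsurj u₀
    have hι : Nonempty {f : ↥(Metric.sphere (0 : C₀(X, ℝ)) 1) // q ∈ Peak ((T f : C₀(Y, ℝ)))} :=
      ⟨⟨f₀, by rw [hf₀]; exact hu₀⟩⟩
    set t : {f : ↥(Metric.sphere (0 : C₀(X, ℝ)) 1) // q ∈ Peak ((T f : C₀(Y, ℝ)))} → Set X :=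
      fun f => Peak ((f.1 : C₀(X, ℝ))) with ht
    have hdir : Directed (· ⊇ ·) t := by
      intro f g
      set w : C₀(Y, ℝ) := midf ((T f.1 : C₀(Y, ℝ))) ((T g.1 : C₀(Y, ℝ))) with hw
      have hqw : q ∈ Peak ((T f.1 : C₀(Y, ℝ))) ∩ Peak ((T g.1 : C₀(Y, ℝ))) := ⟨f.2, g.2⟩
      have hwn : ‖w‖ = 1 := norm_midf (nY (T f.1)) (nY (T g.1)) hqw
      have hpw : Peak w = Peak ((T f.1 : C₀(Y, ℝ))) ∩ Peak ((T g.1 : C₀(Y, ℝ))) :=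
        peak_midf (nY (T f.1)) (nY (T g.1))
      obtain ⟨k, hk⟩ := hsurj ⟨w, mem_sphere_zero_iff_norm.mpr hwn⟩
      have hkw : ((T k : C₀(Y, ℝ))) = w := by rw [hk]
      have hkq : q ∈ Peak ((T k : C₀(Y, ℝ))) := by rw [hkw, hpw]; exact hqw
      refine ⟨⟨k, hkq⟩, ?_, ?_⟩
      · exact hsub' k f.1 (by rw [hkw, hpw]; exact inter_subset_left)
      · exact hsub' k g.1 (by rw [hkw, hpw]; exact inter_subset_right)
    obtain ⟨x, hx⟩ := IsCompact.nonempty_iInter_of_directed_nonempty_isCompact_isClosed t hdir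
      (fun f => peak_nonempty _ (nX f.1))
      (fun f => isCompact_peak _)
      (fun f => isClosed_peak _)
    -- every member of C x is mapped into D q
    have hCxDq : T '' C x ⊆ D q := by
      rintro u ⟨g, hg, rfl⟩
      show q ∈ Peak ((T g : C₀(Y, ℝ)))
      apply rel_all_imp
      intro v hv1 hvq
      set vs : ↥(Metric.sphere (0 : C₀(Y, ℝ)) 1) := ⟨v, mem_sphere_zero_iff_norm.mpr hv1⟩ with hvs
      obtain ⟨h, hh⟩ := hsurj vs
      have hhv : ((T h : C₀(Y, ℝ))) = v := by rw [hh]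
      have hhq : q ∈ Peak ((T h : C₀(Y, ℝ))) := by rw [hhv]; simp [Peak, hvq]
      have hxh : x ∈ Peak ((h : C₀(X, ℝ))) := mem_iInter.mp hx ⟨h, hhq⟩
      have hxg : x ∈ Peak ((g : C₀(X, ℝ))) := hg
      obtain ⟨y, hy1, hy2⟩ := (h2 h g).mpr ⟨x, hxh, hxg⟩
      exact ⟨y, by rw [← hhv]; exact hy1, hy2⟩
    refine ⟨x, ?_⟩
    have hDDq : D (τ x) ⊆ D q := by rw [← hτ x]; exact hCxDq
    apply eq_of_peak_subset (L := Y)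
    intro u hu1 hτu
    set us : ↥(Metric.sphere (0 : C₀(Y, ℝ)) 1) := ⟨u, mem_sphere_zero_iff_norm.mpr hu1⟩ with hus
    have : us ∈ D (τ x) := hτu
    exact hDDq this
  -- conclusion
  refine ⟨τ, ⟨hinj, hsurjτ⟩, ?_⟩
  intro x
  have hset : {f : ↥(Metric.sphere (0 : C₀(X, ℝ)) 1) | (f : C₀(X, ℝ)) x = 1 ∨ (f : C₀(X, ℝ)) x = -1} = C x := by
    ext f
    simp only [hC, mem_setOf_eq, Peak]
    rw [abs_eq zero_le_one]
  have hset' : {u : ↥(Metric.sphere (0 : C₀(Y, ℝ)) 1) | (u : C₀(Y, ℝ)) (τ x) = 1 ∨ (u : C₀(Y, ℝ)) (τ x) = -1} = D (τ x) := by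
    ext u
    simp only [hD, mem_setOf_eq, Peak]
    rw [abs_eq zero_le_one]
  rw [hset, hset', hτ x]
end

section
/- Let X, Y be locally compact Hausdorff spaces and Φ : S(C₀(X, ℝ)) → S(C₀(Y, ℝ)) a surjective phase-isometry such that Φ(M_x) = N_q and Φ(−M_x) = −N_q for some x ∈ X, q ∈ Y (where M_x, N_q are the maximal convex sets of functions equal to 1 at x resp. q). Then Φ restricted to any set tM_x with t ∈ {−1,1} is an isometry: ‖Φ(f) − Φ(g)‖ = ‖f − g‖ for all f, g ∈ tM_x; in particular Φ is continuous on tM_x. -/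
open scoped ZeroAtInfty

lemma zaiNormApp {Z : Type*} [TopologicalSpace Z] (f : C₀(Z, ℝ)) (z : Z) : |f z| ≤ ‖f‖ := by
  rw [← ZeroAtInftyContinuousMap.norm_toBCF_eq_norm]
  exact (abs_le.mpr ⟨neg_le_of_abs_le (f.toBCF.norm_coe_le_norm z), le_of_abs_le (f.toBCF.norm_coe_le_norm z)⟩)

lemma sum2 {Z : Type*} [TopologicalSpace Z] (t : ℝ) (habs : |t| = 1) (u v : C₀(Z, ℝ)) (z : Z)
    (hu : ‖u‖ = 1) (hv : ‖v‖ = 1) (huz : u z = t) (hvz : v z = t) : ‖u + v‖ = 2 := by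
  have h1 : ‖u + v‖ ≤ 2 := by
    calc ‖u + v‖ ≤ ‖u‖ + ‖v‖ := norm_add_le u v
    _ = 2 := by rw [hu, hv]; norm_num
  have h2 : (2 : ℝ) ≤ ‖u + v‖ := by
    have := zaiNormApp (u + v) z
    have happ : (u + v) z = 2 * t := by simp [huz, hvz]; ring
    rw [happ, abs_mul, habs] at this
    simpa using this
  linarith

theorem stmt14 {X Y : Type*} [TopologicalSpace X] [LocallyCompactSpace X] [T2Space X]
    [TopologicalSpace Y] [LocallyCompactSpace Y] [T2Space Y]
    (Φ : Metric.sphere (0 : C₀(X, ℝ)) 1 → Metric.sphere (0 : C₀(Y, ℝ)) 1)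
    (hsurj : Function.Surjective Φ)
    (hpi : ∀ f g : Metric.sphere (0 : C₀(X, ℝ)) 1,
      ({‖(Φ f : C₀(Y, ℝ)) + (Φ g : C₀(Y, ℝ))‖, ‖(Φ f : C₀(Y, ℝ)) - (Φ g : C₀(Y, ℝ))‖} : Set ℝ) =
        {‖(f : C₀(X, ℝ)) + (g : C₀(X, ℝ))‖, ‖(f : C₀(X, ℝ)) - (g : C₀(X, ℝ))‖})
    (x : X) (q : Y)
    (hpos : Φ '' {f : Metric.sphere (0 : C₀(X, ℝ)) 1 | (f : C₀(X, ℝ)) x = 1} =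
      {u : Metric.sphere (0 : C₀(Y, ℝ)) 1 | (u : C₀(Y, ℝ)) q = 1})
    (hneg : Φ '' {f : Metric.sphere (0 : C₀(X, ℝ)) 1 | (f : C₀(X, ℝ)) x = -1} =
      {u : Metric.sphere (0 : C₀(Y, ℝ)) 1 | (u : C₀(Y, ℝ)) q = -1}) :
    ∀ t ∈ ({-1, 1} : Set ℝ),
      (∀ f g : Metric.sphere (0 : C₀(X, ℝ)) 1,
        (f : C₀(X, ℝ)) x = t → (g : C₀(X, ℝ)) x = t →
          ‖(Φ f : C₀(Y, ℝ)) - (Φ g : C₀(Y, ℝ))‖ = ‖(f : C₀(X, ℝ)) - (g : C₀(X, ℝ))‖) ∧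
      ContinuousOn Φ {f : Metric.sphere (0 : C₀(X, ℝ)) 1 | (f : C₀(X, ℝ)) x = t} := by
  intro t ht
  -- key fact: Φ maps the t-level set into the t-level set at q
  have hΦq : ∀ f : Metric.sphere (0 : C₀(X, ℝ)) 1, (f : C₀(X, ℝ)) x = t →
      (Φ f : C₀(Y, ℝ)) q = t := by
    intro f hf
    rcases ht with ht | ht
    · subst ht
      have : Φ f ∈ Φ '' {f : Metric.sphere (0 : C₀(X, ℝ)) 1 | (f : C₀(X, ℝ)) x = -1} :=
        ⟨f, hf, rfl⟩
      rw [hneg] at this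
      exact this
    · simp only [Set.mem_singleton_iff] at ht
      subst ht
      have : Φ f ∈ Φ '' {f : Metric.sphere (0 : C₀(X, ℝ)) 1 | (f : C₀(X, ℝ)) x = 1} :=
        ⟨f, hf, rfl⟩
      rw [hpos] at this
      exact this
  have habs : |t| = 1 := by rcases ht with ht | ht <;> simp_all
  have hsum2X := fun u v z hu hv huz hvz => sum2 (Z := X) t habs u v z hu hv huz hvz
  have hsum2Y := fun u v z hu hv huz hvz => sum2 (Z := Y) t habs u v z hu hv huz hvz
  have hiso : ∀ f g : Metric.sphere (0 : C₀(X, ℝ)) 1,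
      (f : C₀(X, ℝ)) x = t → (g : C₀(X, ℝ)) x = t →
        ‖(Φ f : C₀(Y, ℝ)) - (Φ g : C₀(Y, ℝ))‖ = ‖(f : C₀(X, ℝ)) - (g : C₀(X, ℝ))‖ := by
    intro f g hf hg
    have hfn : ‖(f : C₀(X, ℝ))‖ = 1 := by simpa using mem_sphere_zero_iff_norm.mp f.2
    have hgn : ‖(g : C₀(X, ℝ))‖ = 1 := by simpa using mem_sphere_zero_iff_norm.mp g.2
    have hΦfn : ‖(Φ f : C₀(Y, ℝ))‖ = 1 := by simpa using mem_sphere_zero_iff_norm.mp (Φ f).2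
    have hΦgn : ‖(Φ g : C₀(Y, ℝ))‖ = 1 := by simpa using mem_sphere_zero_iff_norm.mp (Φ g).2
    have h1 : ‖(f : C₀(X, ℝ)) + (g : C₀(X, ℝ))‖ = 2 := hsum2X _ _ x hfn hgn hf hg
    have h2 : ‖(Φ f : C₀(Y, ℝ)) + (Φ g : C₀(Y, ℝ))‖ = 2 :=
      hsum2Y _ _ q hΦfn hΦgn (hΦq f hf) (hΦq g hg)
    have hset := hpi f g
    rw [h1, h2] at hset
    set a := ‖(Φ f : C₀(Y, ℝ)) - (Φ g : C₀(Y, ℝ))‖ with ha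
    set b := ‖(f : C₀(X, ℝ)) - (g : C₀(X, ℝ))‖ with hb
    have hbmem : b ∈ ({(2:ℝ), a} : Set ℝ) := by rw [hset]; right; rfl
    have hamem : a ∈ ({(2:ℝ), b} : Set ℝ) := by rw [← hset]; right; rfl
    rcases hamem with h | h
    · rcases hbmem with h' | h'
      · rw [h, h']
      · rw [h', h]
    · exact h
  refine ⟨hiso, ?_⟩
  have hlip : LipschitzOnWith 1 Φ {f : Metric.sphere (0 : C₀(X, ℝ)) 1 | (f : C₀(X, ℝ)) x = t} := by
    intro f hf g hg
    have := hiso f g hf hg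
    rw [edist_dist, edist_dist]
    have hd1 : dist (Φ f) (Φ g) = ‖(Φ f : C₀(Y, ℝ)) - (Φ g : C₀(Y, ℝ))‖ := by
      rw [Subtype.dist_eq, dist_eq_norm]
    have hd2 : dist f g = ‖(f : C₀(X, ℝ)) - (g : C₀(X, ℝ))‖ := by
      rw [Subtype.dist_eq, dist_eq_norm]
    rw [hd1, hd2, this]
    simp
  exact hlip.continuousOn
end

section
/- Let X, Y be locally compact Hausdorff spaces and suppose Φ : S(C₀(X, ℝ)) → S(C₀(Y, ℝ)), σ : Y → X a bijection, and α : Y → {−1,1} satisfy Φ(f)(q) = α(q)·f(σ(q)) for all f ∈ S(C₀(X, ℝ)) and q ∈ Y. Then σ is continuous. -/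
open scoped ZeroAtInfty

theorem stmt15 {X Y : Type*} [TopologicalSpace X] [LocallyCompactSpace X] [T2Space X]
    [TopologicalSpace Y] [LocallyCompactSpace Y] [T2Space Y]
    (Φ : Metric.sphere (0 : C₀(X, ℝ)) 1 → Metric.sphere (0 : C₀(Y, ℝ)) 1)
    (σ : Y → X) (hσ : Function.Bijective σ)
    (α : Y → ℝ) (hα : ∀ q, α q ∈ ({-1, 1} : Set ℝ))
    (hΦ : ∀ (f : Metric.sphere (0 : C₀(X, ℝ)) 1) (q : Y),
      (Φ f : C₀(Y, ℝ)) q = α q * (f : C₀(X, ℝ)) (σ q)) :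
    Continuous σ := by
  have hαabs : ∀ q, |α q| = 1 := by
    intro q
    have h := hα q
    simp only [Set.mem_insert_iff, Set.mem_singleton_iff] at h
    rcases h with h | h <;> simp [h]
  rw [continuous_def]
  intro U hU
  rw [isOpen_iff_mem_nhds]
  intro q₀ hq₀
  have hq₀U : σ q₀ ∈ U := hq₀
  obtain ⟨f, hf1, hf0, hcs, hmem⟩ :=
    exists_continuous_one_zero_of_isCompact (isCompact_singleton (x := σ q₀))
      hU.isClosed_compl (Set.disjoint_singleton_left.mpr (by simpa using hq₀U))
  set f₀ : C₀(X, ℝ) := ⟨f, hcs.is_zero_at_infty⟩ with hf₀def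
  have hf₀app : ∀ x, f₀ x = f x := fun _ => rfl
  have hnorm : ‖f₀‖ = 1 := by
    apply le_antisymm
    · rw [← ZeroAtInftyContinuousMap.norm_toBCF_eq_norm]
      refine (BoundedContinuousFunction.norm_le zero_le_one).mpr fun x => ?_
      have hx := hmem x
      have hxv : f₀.toBCF x = f x := rfl
      rw [Real.norm_eq_abs, hxv, abs_le]
      exact ⟨by linarith [hx.1], hx.2⟩
    · have h1 : f₀ (σ q₀) = 1 := hf1 rfl
      calc (1 : ℝ) = ‖f₀ (σ q₀)‖ := by rw [h1]; simp
        _ ≤ ‖f₀.toBCF‖ := BoundedContinuousFunction.norm_coe_le_norm f₀.toBCF (σ q₀)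
        _ = ‖f₀‖ := ZeroAtInftyContinuousMap.norm_toBCF_eq_norm
  set F : Metric.sphere (0 : C₀(Y, ℝ)) 1 := Φ ⟨f₀, by simpa [mem_sphere_zero_iff_norm] using hnorm⟩
  set V : Set Y := {q | 1 / 2 < |(F : C₀(Y, ℝ)) q|} with hVdef
  have hVopen : IsOpen V :=
    isOpen_lt continuous_const (continuous_abs.comp (map_continuous (F : C₀(Y, ℝ))))
  have hq₀V : q₀ ∈ V := by
    have : (F : C₀(Y, ℝ)) q₀ = α q₀ * f₀ (σ q₀) := hΦ _ q₀
    simp only [hVdef, Set.mem_setOf_eq, this, hf1 (Set.mem_singleton _), abs_mul, hαabs]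
    rw [hf₀app, hf1 rfl]
    norm_num
  have hVsub : V ⊆ σ ⁻¹' U := by
    intro q hq
    have h1 : (F : C₀(Y, ℝ)) q = α q * f₀ (σ q) := hΦ _ q
    by_contra hnU
    have h0 : f (σ q) = 0 := hf0 hnU
    have hq' : 1 / 2 < |(F : C₀(Y, ℝ)) q| := hq
    rw [h1, hf₀app, h0, mul_zero, abs_zero] at hq'
    linarith
  exact Filter.mem_of_superset (hVopen.mem_nhds hq₀V) hVsub
end

section
/- Let X, Y be locally compact Hausdorff spaces, σ : Y → X continuous, and suppose Φ : S(C₀(X, ℝ)) → S(C₀(Y, ℝ)) and α : Y → {−1,1} satisfy Φ(f)(q) = α(q)·f(σ(q)) for all f ∈ S(C₀(X, ℝ)) and q ∈ Y. Then α is continuous. -/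
open scoped ZeroAtInfty

theorem stmt16 {X Y : Type*} [TopologicalSpace X] [LocallyCompactSpace X] [T2Space X]
    [TopologicalSpace Y] [LocallyCompactSpace Y] [T2Space Y]
    (σ : Y → X) (hσ : Continuous σ)
    (Φ : Metric.sphere (0 : C₀(X, ℝ)) 1 → Metric.sphere (0 : C₀(Y, ℝ)) 1)
    (α : Y → ℝ) (hα : ∀ q, α q ∈ ({-1, 1} : Set ℝ))
    (hΦ : ∀ (f : Metric.sphere (0 : C₀(X, ℝ)) 1) (q : Y),
      (Φ f : C₀(Y, ℝ)) q = α q * (f : C₀(X, ℝ)) (σ q)) :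
    Continuous α := by
  rw [continuous_iff_continuousAt]
  intro q₀
  obtain ⟨f, hf1, hf0, hfc, hf01⟩ :=
    exists_continuous_one_zero_of_isCompact (isCompact_singleton (x := σ q₀))
      isClosed_empty (Set.disjoint_empty _)
  -- build the C₀ element
  let g : C₀(X, ℝ) := ⟨f, hfc.is_zero_at_infty⟩
  have hgval : ∀ x, g x = f x := fun _ => rfl
  have hg1 : g (σ q₀) = 1 := hf1 rfl
  have hgnorm : ‖g‖ = 1 := by
    rw [← ZeroAtInftyContinuousMap.norm_toBCF_eq_norm]
    apply le_antisymm
    · apply BoundedContinuousFunction.norm_le (by norm_num) |>.2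
      intro x
      have := hf01 x
      rw [Set.mem_Icc] at this
      have hx : g.toBCF x = f x := rfl
      rw [hx]
      simp only [Real.norm_eq_abs, abs_le]
      constructor <;> linarith [this.1, this.2]
    · calc (1 : ℝ) = ‖g.toBCF (σ q₀)‖ := by
            have hx : g.toBCF (σ q₀) = f (σ q₀) := rfl
            rw [hx, hf1 rfl]; simp
        _ ≤ ‖g.toBCF‖ := BoundedContinuousFunction.norm_coe_le_norm _ _
  have hgsph : g ∈ Metric.sphere (0 : C₀(X, ℝ)) 1 := by
    simp [mem_sphere_iff_norm, hgnorm]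
  set F : Metric.sphere (0 : C₀(X, ℝ)) 1 := ⟨g, hgsph⟩ with hF
  set h : C₀(Y, ℝ) := (Φ F : C₀(Y, ℝ)) with hh
  have key : ∀ q, g (σ q) ≠ 0 → α q = h q / g (σ q) := by
    intro q hq
    have := hΦ F q
    rw [← hh] at this
    field_simp [this]
    exact this.symm
  have hne : g (σ q₀) ≠ 0 := by rw [hg1]; norm_num
  have hcont : ContinuousAt (fun q => h q / g (σ q)) q₀ := by
    exact (h.continuous.continuousAt).div
      ((g.continuous.comp hσ).continuousAt) hne
  refine hcont.congr ?_
  have hU : IsOpen {q | g (σ q) ≠ 0} :=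
    isOpen_compl_iff.mpr (isClosed_singleton.preimage (g.continuous.comp hσ))
  filter_upwards [hU.mem_nhds hne] with q hq
  exact (key q hq).symm
end
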